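/- arXiv:2005.10491 — 9 statements merged into one kernel-verified Lean document; each statement's English description precedes it below -/
import Mathlib

section
/- For every odd integer t ≥ 3, the chromatic number of the distance graph G(ℤ,{2,t}) equals 3. -/
def distG (t : ℤ) : SimpleGraph ℤ :=
  SimpleGraph.fromRel (fun i j => |i - j| = 2 ∨ |i - j| = t)

/-- the 3-coloring (values in {0,1,2}) -/
def col (t i : ℤ) : ℤ :=
  if (i % (2*t)) % 2 = 0 then
    (if i % (2*t) = 2*t - 2 then 2 else ((i % (2*t))/2) % 2)
  else
    if i % (2*t) < t then
      (if i % (2*t) = t - 2 then 0 else (((i % (2*t)) + t)/2 % 2 + 1) % 3)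
    else (((i % (2*t)) - t)/2 % 2 + 1) % 3

lemma shift_emod (n i d : ℤ) (hn : 0 < n) (hd : 0 ≤ d) (hdn : d < n) :
    (i + d) % n = i % n + d ∨ (i + d) % n = i % n + d - n := by
  have h0 : 0 ≤ i % n := Int.emod_nonneg _ hn.ne'
  have h1 : i % n < n := Int.emod_lt_of_pos _ hn
  have h2 : (i + d) % n = (i % n + d) % n := by
    conv_lhs => rw [Int.add_emod, Int.emod_eq_of_lt hd hdn]
  rcases lt_or_ge (i % n + d) n with h | h
  · left; rw [h2, Int.emod_eq_of_lt (by omega) h]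
  · right
    have h4 : (i % n + d) % n = (i % n + d - n) % n := by
      conv_lhs => rw [show i % n + d = (i % n + d - n) + n*1 by ring]
      rw [Int.add_mul_emod_self_left]
    rw [h2, h4, Int.emod_eq_of_lt (by omega) (by omega)]

lemma col_bounds (t i : ℤ) (h3 : 3 ≤ t) : 0 ≤ col t i ∧ col t i < 3 := by
  have h0 : 0 ≤ i % (2*t) := Int.emod_nonneg _ (by omega)
  have h1 : i % (2*t) < 2*t := Int.emod_lt_of_pos _ (by omega)
  unfold col
  split_ifs <;> omega

lemma col_ne_two (t i : ℤ) (ht : t % 2 = 1) (h3 : 3 ≤ t) : col t i ≠ col t (i + 2) := by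
  have hn : (0:ℤ) < 2*t := by omega
  have h0 : 0 ≤ i % (2*t) := Int.emod_nonneg _ hn.ne'
  have h1 : i % (2*t) < 2*t := Int.emod_lt_of_pos _ hn
  have h0' : 0 ≤ (i+2) % (2*t) := Int.emod_nonneg _ hn.ne'
  have h1' : (i+2) % (2*t) < 2*t := Int.emod_lt_of_pos _ hn
  have hs := shift_emod (2*t) i 2 hn (by norm_num) (by omega)
  unfold col
  split_ifs <;> omega

lemma col_ne_t (t i : ℤ) (ht : t % 2 = 1) (h3 : 3 ≤ t) : col t i ≠ col t (i + t) := by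
  have hn : (0:ℤ) < 2*t := by omega
  have h0 : 0 ≤ i % (2*t) := Int.emod_nonneg _ hn.ne'
  have h1 : i % (2*t) < 2*t := Int.emod_lt_of_pos _ hn
  have h0' : 0 ≤ (i+t) % (2*t) := Int.emod_nonneg _ hn.ne'
  have h1' : (i+t) % (2*t) < 2*t := Int.emod_lt_of_pos _ hn
  have hs := shift_emod (2*t) i t hn (by omega) (by omega)
  unfold col
  split_ifs <;> omega

lemma distG_adj_two (t i : ℤ) (h3 : 3 ≤ t) : (distG t).Adj i (i + 2) := by
  refine ⟨by omega, Or.inl (Or.inl ?_)⟩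
  simp [abs_of_nonpos, show i - (i+2) = -2 by ring]

lemma distG_adj_t (t i : ℤ) (h3 : 3 ≤ t) : (distG t).Adj i (i + t) := by
  refine ⟨by omega, Or.inl (Or.inr ?_)⟩
  rw [show i - (i+t) = -t by ring, abs_neg, abs_of_nonneg (by omega)]

lemma not_colorable_two (t : ℤ) (ht : t % 2 = 1) (h3 : 3 ≤ t) :
    ¬ (distG t).Colorable 2 := by
  rintro ⟨C⟩
  have key : ∀ i j : ℤ, (distG t).Adj i j → C i ≠ C j := fun i j h => C.valid h
  have fin2 : ∀ a b : Fin 2, a ≠ b → (a.val ≠ b.val) := by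
    intro a b h hv; exact h (Fin.ext hv)
  have step4 : ∀ i : ℤ, C (i + 4) = C i := by
    intro i
    have h1 := fin2 _ _ (key i (i+2) (distG_adj_two t i h3))
    have h2 := fin2 _ _ (key (i+2) (i+2+2) (distG_adj_two t (i+2) h3))
    have e : i + 2 + 2 = i + 4 := by ring
    rw [e] at h2
    have := (C i).isLt
    have := (C (i+2)).isLt
    have := (C (i+4)).isLt
    exact (Fin.ext (by omega)).symm
  have aux : ∀ m : ℕ, ∀ i : ℤ, C (i + 4*(m:ℤ)) = C i := by
    intro m
    induction m with
    | zero => simp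
    | succ k ih =>
      intro i
      have e : i + 4*((k:ℤ)+1) = (i + 4) + 4*(k:ℤ) := by ring
      push_cast
      rw [e, ih (i+4), step4]
  -- t = 2m+1 with m ≥ 1
  obtain ⟨m, hm⟩ : ∃ m : ℕ, t = 2*(m:ℤ) + 1 := by
    refine ⟨(t/2).toNat, ?_⟩
    have : 0 ≤ t/2 := by positivity
    omega
  have h2t : C (2*t) = C 2 := by
    have := aux m 2
    rw [show (2:ℤ) + 4*(m:ℤ) = 2*t by omega] at this
    exact this
  have ha : C 0 ≠ C 2 := by
    have := key 0 (0+2) (distG_adj_two t 0 h3); simpa using this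
  have hb : C 0 ≠ C t := by
    have := key 0 (0+t) (distG_adj_t t 0 h3); simpa using this
  have hc : C t ≠ C (2*t) := by
    have := key t (t+t) (distG_adj_t t t h3)
    rw [show t + t = 2*t by ring] at this; exact this
  have := (C 0).isLt
  have := (C 2).isLt
  have := (C t).isLt
  have := (C (2*t)).isLt
  have ha' := fin2 _ _ ha
  have hb' := fin2 _ _ hb
  have hc' := fin2 _ _ hc
  have h2t' : (C (2*t)).val = (C 2).val := by rw [h2t]
  omega

lemma colorable_three (t : ℤ) (ht : t % 2 = 1) (h3 : 3 ≤ t) :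
    (distG t).Colorable 3 := by
  refine ⟨SimpleGraph.Coloring.mk
    (fun i => ⟨(col t i).toNat, by
      have := col_bounds t i h3; omega⟩) ?_⟩
  intro i j hadj
  have hb1 := col_bounds t i h3
  have hb2 := col_bounds t j h3
  have hne : col t i ≠ col t j := by
    obtain ⟨hij, habs⟩ := hadj
    have habs' : |i - j| = 2 ∨ |i - j| = t := by
      rcases habs with h | h
      · exact h
      · rwa [abs_sub_comm] at h
    rcases habs' with h | h
    · rcases (abs_eq (by norm_num)).mp h with h | h
      · have := col_ne_two t j ht h3
        rw [show j + 2 = i by omega] at this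
        exact this.symm
      · have := col_ne_two t i ht h3
        rw [show i + 2 = j by omega] at this
        exact this
    · rcases (abs_eq (by omega)).mp h with h | h
      · have := col_ne_t t j ht h3
        rw [show j + t = i by omega] at this
        exact this.symm
      · have := col_ne_t t i ht h3
        rw [show i + t = j by omega] at this
        exact this
  intro hEq
  have hv : (col t i).toNat = (col t j).toNat := congrArg Fin.val hEq
  exact hne (by omega)

theorem stmt1 (t : ℤ) (ht : Odd t) (h3 : 3 ≤ t) :
    (distG t).chromaticNumber = 3 := by
  have ht' : t % 2 = 1 := Int.odd_iff.mp ht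
  have hup : (distG t).chromaticNumber ≤ 3 := by
    have := (colorable_three t ht' h3).chromaticNumber_le
    exact_mod_cast this
  have hlow : ¬ (distG t).chromaticNumber ≤ 2 := by
    intro h
    exact not_colorable_two t ht' h3
      (SimpleGraph.chromaticNumber_le_iff_colorable.mp (by exact_mod_cast h))
  have h2lt : (2 : ℕ∞) < (distG t).chromaticNumber := not_le.mp hlow
  have : (2 : ℕ∞) + 1 ≤ (distG t).chromaticNumber := Order.add_one_le_of_lt h2lt
  have h3le : (3 : ℕ∞) ≤ (distG t).chromaticNumber := by
    rw [show (3:ℕ∞) = 2 + 1 by norm_num]; exact this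
  exact le_antisymm hup h3le
end

section
/- For every odd integer t ≥ 3, the graph G(ℤ,{2,t}) admits no (1,1,2)-packing coloring: there is no map f:ℤ→{1,2,3} such that f⁻¹(1) and f⁻¹(2) are independent sets and f⁻¹(3) is a 2-packing (any two distinct vertices of color 3 are at graph distance greater than 2). -/
theorem stmt3 (t : ℤ) (ht : Odd t) (h3 : 3 ≤ t) :
    ¬ ∃ f : ℤ → Fin 3, ∀ u v : ℤ, u ≠ v → f u = f v →
      ((f u : ℕ) < 2 → ¬ (distG t).Adj u v) ∧ (2 ≤ (f u : ℕ) → 2 < (distG t).dist u v) := by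
  rintro ⟨f, hf⟩
  -- adjacency lemmas
  have hadj : ∀ a b : ℤ, a ≠ b → (|a - b| = 2 ∨ |a - b| = t) → (distG t).Adj a b := by
    intro a b hne h
    rw [distG, SimpleGraph.fromRel_adj]
    exact ⟨hne, Or.inl h⟩
  have hadj2 : ∀ a : ℤ, (distG t).Adj a (a + 2) := by
    intro a
    apply hadj a (a+2) (by omega)
    left
    have : a - (a + 2) = -2 := by ring
    rw [this]; norm_num
  have hadjt : ∀ a : ℤ, (distG t).Adj a (a + t) := by
    intro a
    apply hadj a (a+t) (by omega)
    right
    have : a - (a + t) = -t := by ring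
    rw [this, abs_neg, abs_of_nonneg (by omega : (0:ℤ) ≤ t)]
  -- distance bounds
  have hdist1 : ∀ a b : ℤ, (distG t).Adj a b → (distG t).dist a b ≤ 1 := by
    intro a b h
    have := SimpleGraph.dist_le (SimpleGraph.Walk.cons h SimpleGraph.Walk.nil)
    simpa using this
  have hdist2 : ∀ a b c : ℤ, (distG t).Adj a b → (distG t).Adj b c →
      (distG t).dist a c ≤ 2 := by
    intro a b c h1 h2
    have := SimpleGraph.dist_le (SimpleGraph.Walk.cons h1
      (SimpleGraph.Walk.cons h2 SimpleGraph.Walk.nil))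
    simpa using this
  -- no two color-2 vertices at distance ≤ 2
  have hPack : ∀ a b : ℤ, a ≠ b → (distG t).dist a b ≤ 2 → f a = 2 → f b = 2 → False := by
    intro a b hne hd ha hb
    have h2 := (hf a b hne (ha.trans hb.symm)).2 (by rw [ha]; decide)
    omega
  -- adjacent vertices have different colors
  have hadj_ne : ∀ a b : ℤ, (distG t).Adj a b → f a ≠ f b := by
    intro a b hab heq
    obtain ⟨h1, h2⟩ := hf a b hab.ne heq
    rcases lt_or_ge ((f a : ℕ)) 2 with h | h
    · exact h1 h hab
    · have := hdist1 a b hab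
      have := h2 h
      omega
  -- specific pack facts
  have pk2 : ∀ a : ℤ, f a = 2 → f (a + 2) = 2 → False := by
    intro a ha hb
    exact hPack a (a+2) (by omega) (le_trans (hdist1 _ _ (hadj2 a)) (by norm_num)) ha hb
  have pkt : ∀ a : ℤ, f a = 2 → f (a + t) = 2 → False := by
    intro a ha hb
    exact hPack a (a+t) (by omega) (le_trans (hdist1 _ _ (hadjt a)) (by norm_num)) ha hb
  have pktm2 : ∀ a : ℤ, f a = 2 → f (a + (t - 2)) = 2 → False := by
    intro a ha hb
    refine hPack a (a + (t-2)) (by omega) ?_ ha hb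
    have h1 : (distG t).Adj a (a + t) := hadjt a
    have h2 : (distG t).Adj (a + t) (a + (t - 2)) := by
      apply hadj _ _ (by omega)
      left
      have : a + t - (a + (t-2)) = 2 := by ring
      rw [this]; norm_num
    exact hdist2 _ _ _ h1 h2
  have pktp2 : ∀ a : ℤ, f a = 2 → f (a + (t + 2)) = 2 → False := by
    intro a ha hb
    refine hPack a (a + (t+2)) (by omega) ?_ ha hb
    have h1 : (distG t).Adj a (a + t) := hadjt a
    have h2 : (distG t).Adj (a + t) (a + (t + 2)) := by
      have := hadj2 (a + t)
      have e : a + t + 2 = a + (t + 2) := by ring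
      rwa [e] at this
    exact hdist2 _ _ _ h1 h2
  -- F : parity color
  set F : ℤ → ZMod 2 := fun u => ((f u : ℕ) : ZMod 2) with hF
  have hflip : ∀ a b : ℤ, f a ≠ 2 → f b ≠ 2 → f a ≠ f b → F b = F a + 1 := by
    intro a b ha hb hne
    have key : ∀ x y : Fin 3, x ≠ 2 → y ≠ 2 → x ≠ y →
        ((y : ℕ) : ZMod 2) = ((x : ℕ) : ZMod 2) + 1 := by decide
    exact key (f a) (f b) ha hb hne
  -- alternation lemma
  have alt : ∀ n : ℕ, ∀ u : ℤ, f u ≠ 2 → f (u + 2*(n:ℤ)) ≠ 2 →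
      F (u + 2*(n:ℤ)) = F u + (n : ZMod 2) := by
    intro n
    induction n using Nat.strong_induction_on with
    | _ n IH =>
      intro u hu hun
      rcases Nat.eq_zero_or_pos n with h0 | hpos
      · subst h0; simpa using rfl
      by_cases h2 : f (u + 2) = 2
      · -- bridge case
        have hn1 : n ≠ 1 := by
          rintro rfl
          apply hun
          have e : u + 2*((1:ℕ):ℤ) = u + 2 := by push_cast; ring
          rw [e]; exact h2
        have hn2 : 2 ≤ n := by omega
        have hA : f (u + t) ≠ 2 := by
          intro h
          apply pktm2 (u+2) h2
          have e : u + 2 + (t - 2) = u + t := by ring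
          rw [e]; exact h
        have hB : f (u + t + 2) ≠ 2 := by
          intro h
          apply pkt (u+2) h2
          have e : u + 2 + t = u + t + 2 := by ring
          rw [e]; exact h
        have hC : f (u + t + 4) ≠ 2 := by
          intro h
          apply pktp2 (u+2) h2
          have e : u + 2 + (t + 2) = u + t + 4 := by ring
          rw [e]; exact h
        have hD : f (u + 4) ≠ 2 := by
          intro h
          apply pk2 (u+2) h2
          have e : u + 2 + 2 = u + 4 := by ring
          rw [e]; exact h
        have e1 : F (u + t) = F u + 1 := hflip u (u+t) hu hA (hadj_ne _ _ (hadjt u))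
        have e2 : F (u + t + 2) = F (u + t) + 1 :=
          hflip (u+t) (u+t+2) hA hB (hadj_ne _ _ (hadj2 (u+t)))
        have e3 : F (u + t + 4) = F (u + t + 2) + 1 := by
          have := hflip (u+t+2) (u+t+4) hB ?_ (hadj_ne _ _ ?_)
          · convert this using 3 <;> ring_nf
          · have e : u + t + 2 + 2 = u + t + 4 := by ring
            rw [← e]; rw [e]; exact hC
          · have := hadj2 (u + t + 2)
            have e : u + t + 2 + 2 = u + t + 4 := by ring
            rwa [e] at this
        have e4 : F (u + t + 4) = F (u + 4) + 1 := by
          have hadj' : (distG t).Adj (u+4) (u+t+4) := by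
            have := hadjt (u+4)
            have e : u + 4 + t = u + t + 4 := by ring
            rwa [e] at this
          exact hflip (u+4) (u+t+4) hD hC (hadj_ne _ _ hadj')
        have e5 : F (u + 4) = F u := by
          have h2z : (2 : ZMod 2) = 0 := by decide
          linear_combination e1 + e2 + e3 - e4 + h2z
        have hrec := IH (n - 2) (by omega) (u + 4) hD ?_
        · have ecast : ((n - 2 : ℕ) : ZMod 2) = (n : ZMod 2) := by
            have : ((n - 2 : ℕ) : ZMod 2) = (n : ZMod 2) - 2 := by
              push_cast [Nat.cast_sub hn2]; ring
            rw [this]; have h2z : (2 : ZMod 2) = 0 := by decide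
            rw [h2z]; ring
          have epos : u + 4 + 2*((n-2:ℕ):ℤ) = u + 2*(n:ℤ) := by
            push_cast [Nat.cast_sub hn2]; ring
          rw [epos, ecast, e5] at hrec
          exact hrec
        · have epos : u + 4 + 2*((n-2:ℕ):ℤ) = u + 2*(n:ℤ) := by
            push_cast [Nat.cast_sub hn2]; ring
          rw [epos]; exact hun
      · -- simple step
        have e1 : F (u + 2) = F u + 1 := hflip u (u+2) hu h2 (hadj_ne _ _ (hadj2 u))
        have hrec := IH (n - 1) (by omega) (u + 2) h2 ?_
        · have epos : u + 2 + 2*((n-1:ℕ):ℤ) = u + 2*(n:ℤ) := by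
            push_cast [Nat.cast_sub hpos]; ring
          have ecast : ((n - 1 : ℕ) : ZMod 2) = (n : ZMod 2) - 1 := by
            push_cast [Nat.cast_sub hpos]; ring
          rw [epos, ecast, e1] at hrec
          rw [hrec]; ring
        · have epos : u + 2 + 2*((n-1:ℕ):ℤ) = u + 2*(n:ℤ) := by
            push_cast [Nat.cast_sub hpos]; ring
          rw [epos]; exact hun
  -- integer version
  have altZ : ∀ u k : ℤ, f u ≠ 2 → f (u + 2*k) ≠ 2 →
      F (u + 2*k) = F u + ((k : ℤ) : ZMod 2) := by
    intro u k hu huk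
    rcases le_or_gt 0 k with hk | hk
    · have e : u + 2*((k.toNat : ℕ) : ℤ) = u + 2*k := by
        rw [Int.toNat_of_nonneg hk]
      have := alt k.toNat u hu (by rw [e]; exact huk)
      rw [e] at this
      rw [this]
      congr 1
      rw [← Int.cast_natCast, Int.toNat_of_nonneg hk]
    · have e : (u + 2*k) + 2*(((-k).toNat : ℕ) : ℤ) = u := by
        rw [Int.toNat_of_nonneg (by omega : (0:ℤ) ≤ -k)]; ring
      have := alt (-k).toNat (u + 2*k) huk (by rw [e]; exact hu)
      rw [e] at this
      have hc : (((-k).toNat : ℕ) : ZMod 2) = -((k : ℤ) : ZMod 2) := by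
        rw [← Int.cast_natCast, Int.toNat_of_nonneg (by omega : (0:ℤ) ≤ -k)]
        push_cast; ring
      rw [hc] at this
      linear_combination -this
  -- pick u with f u ≠ 2 and f (u+t) ≠ 2
  have pick_u : ∃ u : ℤ, (u = 0 ∨ u = 2) ∧ f u ≠ 2 ∧ f (u + t) ≠ 2 := by
    by_cases c0 : f 0 = 2
    · refine ⟨2, Or.inr rfl, ?_, ?_⟩
      · intro h; exact pk2 0 c0 h
      · intro h
        apply pktp2 0 c0
        have e : (0:ℤ) + (t + 2) = 2 + t := by ring
        rw [e]; exact h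
    · by_cases ct : f (0 + t) = 2
      · refine ⟨2, Or.inr rfl, ?_, ?_⟩
        · intro h
          apply pktm2 2 h
          have e : (2:ℤ) + (t - 2) = 0 + t := by ring
          rw [e]; exact ct
        · intro h
          apply pk2 (0 + t) ct
          have e : 0 + t + 2 = 2 + t := by ring
          rw [e]; exact h
      · exact ⟨0, Or.inl rfl, c0, ct⟩
  -- pick w with f w ≠ 2 and f (w-t) ≠ 2
  have pick_w : ∃ w : ℤ, (w = 0 ∨ w = 2) ∧ f w ≠ 2 ∧ f (w - t) ≠ 2 := by
    by_cases c0 : f 0 = 2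
    · refine ⟨2, Or.inr rfl, ?_, ?_⟩
      · intro h; exact pk2 0 c0 h
      · intro h
        apply pktm2 (2 - t) h
        have e : 2 - t + (t - 2) = 0 := by ring
        rw [e]; exact c0
    · by_cases cm : f (0 - t) = 2
      · refine ⟨2, Or.inr rfl, ?_, ?_⟩
        · intro h
          apply pktp2 (0 - t) cm
          have e : 0 - t + (t + 2) = 2 := by ring
          rw [e]; exact h
        · intro h
          apply pk2 (0 - t) cm
          have e : 0 - t + 2 = 2 - t := by ring
          rw [e]; exact h
      · exact ⟨0, Or.inl rfl, c0, cm⟩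
  obtain ⟨u, hu01, hu, hut⟩ := pick_u
  obtain ⟨w, hw01, hw, hwt⟩ := pick_w
  obtain ⟨k, hk⟩ : ∃ k : ℤ, w = u + 2*k := by
    refine ⟨(w - u)/2, ?_⟩
    rcases hu01 with rfl | rfl <;> rcases hw01 with rfl | rfl <;> norm_num
  -- main equations
  have eA : F (u + t) = F u + 1 := hflip u (u+t) hu hut (hadj_ne _ _ (hadjt u))
  have eB : F w = F (w - t) + 1 := by
    have hadj' : (distG t).Adj (w - t) w := by
      have := hadjt (w - t)
      have e : w - t + t = w := by ring
      rwa [e] at this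
    exact hflip (w-t) w hwt hw (hadj_ne _ _ hadj')
  have eC : F w = F u + ((k : ℤ) : ZMod 2) := by
    have := altZ u k hu (by rw [← hk]; exact hw)
    rwa [← hk] at this
  have eD : F (w - t) = F (u + t) + (((k - t : ℤ)) : ZMod 2) := by
    have e : (u + t) + 2*(k - t) = w - t := by omega
    have := altZ (u+t) (k-t) hut (by rw [e]; exact hwt)
    rwa [e] at this
  have ecast : (((k - t : ℤ)) : ZMod 2) = ((k : ℤ) : ZMod 2) - ((t : ℤ) : ZMod 2) := by
    push_cast; ring
  have ht2 : ((t : ℤ) : ZMod 2) = 1 := by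
    obtain ⟨m, hm⟩ := ht
    subst hm
    push_cast
    have h2z : (2 : ZMod 2) = 0 := by decide
    linear_combination (m : ZMod 2) * h2z
  have : (0 : ZMod 2) = 1 := by
    linear_combination eB + eD + eA - eC + ecast - ht2
  exact absurd this (by decide)
end

section
/- For every odd integer t ≥ 3, the graph G(ℤ,{2,t}) admits a (1,1,2,2)-packing coloring, i.e., a map f:ℤ→{1,2,3,4} such that color classes 1 and 2 are independent sets and color classes 3 and 4 are 2-packings. -/
open SimpleGraph

theorem ZMod.val_add_one_of_add_one_ne_zero {n : ℕ} [NeZero n] {x : ZMod n} (hx : x + 1 ≠ 0) :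
    (x + 1).val = x.val + 1 := by
  have hcast : x + 1 = ((x.val + 1 : ℕ) : ZMod n) := by push_cast [ZMod.natCast_zmod_val]; rfl
  rcases (Nat.succ_le_of_lt x.val_lt).lt_or_eq with hlt | heq
  · rw [hcast, ZMod.val_natCast, Nat.mod_eq_of_lt hlt]
  · exact absurd (by rw [hcast, ZMod.natCast_eq_zero_iff]; exact ⟨1, by omega⟩) hx

theorem ZMod.two_mul_inv_two {p : ℕ} (hp : Odd p) : (2 : ZMod p) * 2⁻¹ = 1 := by
  simpa using ZMod.coe_mul_inv_eq_one 2 (Nat.coprime_two_left.mpr hp)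

theorem SimpleGraph.reachable_add_mul {G : SimpleGraph ℤ} {d : ℤ}
    (h : ∀ x, G.Reachable x (x + d)) (x n : ℤ) : G.Reachable x (x + n * d) := by
  induction n using Int.induction_on with
  | zero => simp
  | succ n ih => simpa [add_mul, add_assoc] using ih.trans (h _)
  | pred n ih => exact ih.trans (by convert (h (x + (-n - 1) * d)).symm using 1; ring)

theorem SimpleGraph.preconnected_of_reachable_add_one {G : SimpleGraph ℤ}
    (h : ∀ x, G.Reachable x (x + 1)) : G.Preconnected := fun u v => by
  simpa using reachable_add_mul h u (v - u)

namespace distG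

theorem adj_iff (t : ℤ) {u v : ℤ} :
    (distG t).Adj u v ↔ u ≠ v ∧ (|u - v| = 2 ∨ |u - v| = t) := by
  simp only [distG, fromRel_adj, abs_sub_comm v u, or_self]

theorem adj_add_two (t x : ℤ) : (distG t).Adj x (x + 2) := by
  simp [adj_iff]

theorem adj_add {t : ℤ} (ht : 0 < t) (x : ℤ) : (distG t).Adj x (x + t) := by
  simp [adj_iff, ht.ne', abs_of_pos ht]

theorem connected {t : ℤ} (ht : Odd t) (h0 : 0 < t) : (distG t).Connected := by
  obtain ⟨n, rfl⟩ := ht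
  have step_two (x : ℤ) : (distG (2 * n + 1)).Reachable x (x + 2) := (adj_add_two _ x).reachable
  refine ⟨preconnected_of_reachable_add_one fun x => ?_⟩
  convert (adj_add h0 x).reachable.trans (reachable_add_mul step_two _ (-n)) using 1
  ring

theorem abs_sub_le_mul_length {t : ℤ} (ht : 2 ≤ t) {u v : ℤ} (w : (distG t).Walk u v) :
    |u - v| ≤ t * w.length := by
  induction w with
  | nil => simp
  | @cons a b c h p ih =>
    have hab : |a - b| ≤ t := by
      rcases ((adj_iff t).mp h).2 with h2 | h2 <;> omega
    calc |a - c| ≤ |a - b| + |b - c| := abs_sub_le a b c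
      _ ≤ t * (p.cons h).length := by rw [Walk.length_cons]; push_cast; linarith

theorem abs_sub_le_mul_dist {t : ℤ} (ht : Odd t) (h2 : 2 ≤ t) (u v : ℤ) :
    |u - v| ≤ t * (distG t).dist u v := by
  obtain ⟨w, hw⟩ := (connected ht (by omega)).exists_walk_length_eq_dist u v
  exact hw ▸ abs_sub_le_mul_length h2 w

theorem lt_dist_of_mul_lt_abs_sub {t : ℤ} (ht : Odd t) (h2 : 2 ≤ t) {u v : ℤ} {n : ℕ}
    (h : t * n < |u - v|) : n < (distG t).dist u v := by
  by_contra! hle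
  have : t * (distG t).dist u v ≤ t * n := by gcongr
  linarith [abs_sub_le_mul_dist ht h2 u v]

end distG

section Coloring

variable {p : ℕ}

def cycleIndex (p : ℕ) (i : ℤ) : ZMod p := i * 2⁻¹

theorem cycleIndex_sub (i j : ℤ) : cycleIndex p (i - j) = cycleIndex p i - cycleIndex p j := by
  simp [cycleIndex, sub_mul]

theorem cycleIndex_mul_two (hp : Odd p) (i : ℤ) : cycleIndex p i * 2 = i := by
  rw [cycleIndex, mul_assoc, mul_comm _ (2 : ZMod p), ZMod.two_mul_inv_two hp, mul_one]

theorem cycleIndex_eq_one_or_eq_neg_one {t : ℤ} (hp : Odd p) (ht : (t : ZMod p) = -2) {d : ℤ}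
    (hd : |d| = 2 ∨ |d| = t) : cycleIndex p d = 1 ∨ cycleIndex p d = -1 := by
  have h2 : cycleIndex p 2 = 1 := by simpa [cycleIndex] using ZMod.two_mul_inv_two hp
  have htp : cycleIndex p t = -1 := by rw [cycleIndex, ht, neg_mul, ZMod.two_mul_inv_two hp]
  have hneg (i : ℤ) : cycleIndex p (-i) = -cycleIndex p i := by simp [cycleIndex]
  rcases hd with hd | hd <;> rcases abs_eq (hd ▸ abs_nonneg d) |>.mp hd with rfl | rfl <;>
    simp [h2, htp, hneg]

theorem cycleIndex_eq_add_one_of_adj {t : ℤ} (hp : Odd p) (ht : (t : ZMod p) = -2) {u v : ℤ}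
    (h : (distG t).Adj u v) :
    cycleIndex p u = cycleIndex p v + 1 ∨ cycleIndex p v = cycleIndex p u + 1 := by
  have := cycleIndex_eq_one_or_eq_neg_one hp ht ((distG.adj_iff t).mp h).2
  rw [cycleIndex_sub] at this
  rcases this with h1 | h1
  · left; linear_combination h1
  · right; linear_combination -h1

def cycleColoring (p : ℕ) (i : ℤ) : Fin 4 :=
  if cycleIndex p i = -1 then (if Even i then 2 else 3)
  else if Even (cycleIndex p i).val then 0 else 1

theorem cycleColoring_lt_two_iff {i : ℤ} :
    (cycleColoring p i : ℕ) < 2 ↔ cycleIndex p i ≠ -1 := by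
  unfold cycleColoring; split_ifs <;> simp_all

theorem cycleColoring_ne_of_cycleIndex_eq_add_one [NeZero p] {u v : ℤ}
    (hu : cycleIndex p u ≠ -1) (hv : cycleIndex p v ≠ -1)
    (h : cycleIndex p v = cycleIndex p u + 1) : cycleColoring p u ≠ cycleColoring p v := by
  have hval : (cycleIndex p v).val = (cycleIndex p u).val + 1 :=
    h ▸ ZMod.val_add_one_of_add_one_ne_zero (fun h0 => hu (eq_neg_of_add_eq_zero_left h0))
  simp only [cycleColoring, if_neg hu, if_neg hv, hval, Nat.even_add_one]
  split_ifs <;> decide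

theorem cycleColoring_ne_of_adj {t : ℤ} (hp : Odd p) (ht : (t : ZMod p) = -2) {u v : ℤ}
    (h : (distG t).Adj u v) (hu : (cycleColoring p u : ℕ) < 2)
    (hv : (cycleColoring p v : ℕ) < 2) : cycleColoring p u ≠ cycleColoring p v := by
  have : NeZero p := ⟨hp.pos.ne'⟩
  rw [cycleColoring_lt_two_iff] at hu hv
  rcases cycleIndex_eq_add_one_of_adj hp ht h with h' | h'
  · exact (cycleColoring_ne_of_cycleIndex_eq_add_one hv hu h').symm
  · exact cycleColoring_ne_of_cycleIndex_eq_add_one hu hv h'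

theorem two_mul_dvd_sub_of_cycleColoring_eq (hp : Odd p) {u v : ℤ}
    (h2 : 2 ≤ (cycleColoring p u : ℕ)) (h : cycleColoring p u = cycleColoring p v) :
    2 * (p : ℤ) ∣ u - v := by
  have hu : cycleIndex p u = -1 := by
    by_contra hu; exact (cycleColoring_lt_two_iff.mpr hu).not_ge h2
  have hv : cycleIndex p v = -1 := by
    by_contra hv; exact (cycleColoring_lt_two_iff.mpr hv).not_ge (h ▸ h2)
  have hp_dvd : (p : ℤ) ∣ u - v := by
    rw [← ZMod.intCast_eq_intCast_iff_dvd_sub, ← cycleIndex_mul_two hp, ← cycleIndex_mul_two hp,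
      hu, hv]
  have heven : Even (u - v) := by
    simp only [cycleColoring, if_pos hu, if_pos hv] at h
    rw [Int.even_sub]
    split_ifs at h <;> tauto
  exact (Nat.isCoprime_iff_coprime.mpr (Nat.coprime_two_left.mpr hp)).mul_dvd
    (even_iff_two_dvd.mp heven) hp_dvd

end Coloring

theorem stmt4 (t : ℤ) (ht : Odd t) (h3 : 3 ≤ t) :
    ∃ f : ℤ → Fin 4, ∀ u v : ℤ, u ≠ v → f u = f v →
      ((f u : ℕ) < 2 → ¬ (distG t).Adj u v) ∧ (2 ≤ (f u : ℕ) → 2 < (distG t).dist u v) := by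
  set p := (t + 2).toNat
  have hpt : (p : ℤ) = t + 2 := Int.toNat_of_nonneg (by omega)
  have hp : Odd p := by rw [← Int.odd_coe_nat, hpt]; exact ht.add_even even_two
  have htp : (t : ZMod p) = -2 := by
    have : ((p : ℤ) : ZMod p) = 0 := by simp
    rw [hpt] at this; push_cast at this; linear_combination this
  refine ⟨cycleColoring p, fun u v hne huv => ⟨fun hlt hadj => ?_, fun h2 => ?_⟩⟩
  · exact cycleColoring_ne_of_adj hp htp hadj hlt (huv ▸ hlt) huv
  · have hfar : 2 * (p : ℤ) ≤ |u - v| := Int.le_of_dvd (abs_pos.mpr (sub_ne_zero.mpr hne))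
      ((dvd_abs _ _).mpr (two_mul_dvd_sub_of_cycleColoring_eq hp h2 huv))
    exact distG.lt_dist_of_mul_lt_abs_sub ht (by omega) (by push_cast; linarith)
end

section
/- If t ≥ 3 is odd and S = (1,1,2,2,2,…), then the S-packing chromatic number of G(ℤ,{2,t}) is exactly 4. -/
open SimpleGraph

section Steps

variable {R S : Type*} [Ring R] [Ring S]

def steps (t : R) : List R := [2, -2, t, -t]

/-- The nonzero sums of two elements of `steps t`. -/
def twoSteps (t : R) : List R :=
  [4, -4, t + 2, -(t + 2), t - 2, -(t - 2), 2 * t, -(2 * t)]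

theorem map_steps (φ : R →+* S) (t : R) : (steps t).map φ = steps (φ t) := by
  simp [steps, map_ofNat]

theorem map_twoSteps (φ : R →+* S) (t : R) : (twoSteps t).map φ = twoSteps (φ t) := by
  simp [twoSteps, map_ofNat]

end Steps

section distG

variable {t : ℤ}

theorem distG_adj_iff (ht : 0 < t) {u v : ℤ} : (distG t).Adj u v ↔ v - u ∈ steps t := by
  simp only [distG, fromRel_adj, steps, List.mem_cons, List.not_mem_nil, or_false]
  rw [abs_sub_comm v u]
  rcases abs_cases (u - v) with ⟨h, _⟩ | ⟨h, _⟩ <;> rw [h] <;> omega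

theorem distG_adj_add (ht : 0 < t) (u : ℤ) {s : ℤ} (hs : s ∈ steps t) :
    (distG t).Adj u (u + s) := by
  rwa [distG_adj_iff ht, add_sub_cancel_left]

theorem distG_preconnected (ht : Odd t) (h0 : 0 < t) : (distG t).Preconnected := by
  have reach (s : ℤ) (hs : s ∈ steps t) :=
    reachable_add_mul fun x => (distG_adj_add h0 x hs).reachable
  obtain ⟨m, hm⟩ := ht
  have hone (x : ℤ) : (distG t).Reachable x (x + 1) := by
    have h := (reach t (by simp [steps]) x 1).trans (reach 2 (by simp [steps]) _ (-m))
    rwa [show x + 1 * t + -m * 2 = x + 1 by rw [hm]; ring] at h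
  intro x y
  simpa using reachable_add_mul hone x (y - x)

theorem sub_mem_of_distG_dist_le_two (ht : Odd t) (h0 : 0 < t) {u v : ℤ} (hne : u ≠ v)
    (hd : (distG t).dist u v ≤ 2) : v - u ∈ steps t ++ twoSteps t := by
  obtain ⟨p, hp⟩ := (distG_preconnected ht h0 u v).exists_walk_length_eq_dist
  match p, hp with
  | .nil, _ => exact absurd rfl hne
  | .cons h .nil, _ => simp [(distG_adj_iff h0).mp h]
  | .cons (v := w) h₁ (.cons h₂ .nil), _ =>
    have hs₁ := (distG_adj_iff h0).mp h₁
    have hs₂ := (distG_adj_iff h0).mp h₂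
    simp only [steps, twoSteps, List.cons_append, List.nil_append, List.mem_cons,
      List.not_mem_nil, or_false] at hs₁ hs₂ ⊢
    omega
  | .cons _ (.cons _ (.cons _ _)), hp => simp at hp; omega

theorem distG_dist_add_add_le_two (h0 : 0 < t) (u : ℤ) {s s' : ℤ} (hs : s ∈ steps t)
    (hs' : s' ∈ steps t) : (distG t).dist u (u + s + s') ≤ 2 :=
  dist_le (.cons (distG_adj_add h0 u hs) (.cons (distG_adj_add h0 _ hs') .nil))

end distG

section PackingColoring

variable {V : Type*} {k : ℕ}

/-- An `S`-packing coloring for `S = (1, 1, 2, 2, …)`, with colors numbered from `0`. -/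
def IsPackingColoring (G : SimpleGraph V) (f : V → Fin k) : Prop :=
  ∀ u v, u ≠ v → f u = f v →
    ((f u : ℕ) < 2 → ¬ G.Adj u v) ∧ (2 ≤ (f u : ℕ) → 2 < G.dist u v)

variable {G : SimpleGraph V} {f : V → Fin k} {u v : V}

theorem IsPackingColoring.ne_of_adj (hf : IsPackingColoring G f) (h : G.Adj u v) :
    f u ≠ f v := by
  intro huv
  have hpack := hf u v h.ne huv
  by_cases hu : (f u : ℕ) < 2
  · exact hpack.1 hu h
  · have := hpack.2 (by omega)
    rw [dist_eq_one_iff_adj.mpr h] at this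
    omega

theorem IsPackingColoring.lt_two_of_dist_le_two (hf : IsPackingColoring G f) (hk : k ≤ 3)
    (hne : u ≠ v) (hd : G.dist u v ≤ 2) (hu : 2 ≤ (f u : ℕ)) : (f v : ℕ) < 2 := by
  by_contra hv
  have huv : f u = f v := Fin.ext (by omega)
  have := (hf u v hne huv).2 hu
  omega

end PackingColoring

theorem exists_checkerboard_of_ladder {A B : ℕ → ℕ} (hA : ∀ n, A n ≤ 2) (hB : ∀ n, B n ≤ 2)
    (hrung : ∀ n, A n ≠ B n) (hrailA : ∀ n, A n ≠ A (n + 1)) (hrailB : ∀ n, B n ≠ B (n + 1))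
    (hdiagA : ∀ n, A n = 2 → B (n + 1) ≠ 2) (hdiagB : ∀ n, B n = 2 → A (n + 1) ≠ 2) :
    ∃ c, ∀ n, (A n < 2 → A n = (c + n) % 2) ∧ (B n < 2 → B n = (c + n + 1) % 2) := by
  refine ⟨if A 0 < 2 then A 0 else B 0 + 1, fun n => ?_⟩
  induction n with
  | zero => have := hrung 0; split_ifs <;> omega
  | succ n ih =>
    have := hA n; have := hB n; have := hA (n + 1); have := hB (n + 1)
    have := hrung n; have := hrung (n + 1); have := hrailA n; have := hrailB n
    have := hdiagA n; have := hdiagB n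
    omega

theorem exists_mem_add_two_or_add_four_mem {H : Set ℤ} {a b : ℤ} (h₀ : a ∈ H ∨ b ∈ H)
    (h₂ : a + 2 ∈ H ∨ b + 2 ∈ H) (h₄ : a + 4 ∈ H ∨ b + 4 ∈ H) :
    ∃ x ∈ H, x + 2 ∈ H ∨ x + 4 ∈ H := by
  rcases h₀ with h₀ | h₀ <;> rcases h₂ with h₂ | h₂
  · exact ⟨_, h₀, .inl h₂⟩
  · rcases h₄ with h₄ | h₄
    · exact ⟨_, h₀, .inr h₄⟩
    · exact ⟨b + 2, h₂, .inl (by rwa [add_assoc])⟩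
  · rcases h₄ with h₄ | h₄
    · exact ⟨a + 2, h₂, .inl (by rwa [add_assoc])⟩
    · exact ⟨_, h₀, .inr h₄⟩
  · exact ⟨_, h₀, .inl h₂⟩

theorem IsPackingColoring.four_le {t : ℤ} {k : ℕ} {f : ℤ → Fin k} (ht : Odd t) (h0 : 0 < t)
    (hf : IsPackingColoring (distG t) f) : 4 ≤ k := by
  by_contra! hk
  replace hk : k ≤ 3 := by omega
  obtain ⟨m, hm⟩ := ht
  lift m to ℕ using by omega
  have hle (v : ℤ) : (f v : ℕ) ≤ 2 := by have := (f v).isLt; omega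
  have hne (u : ℤ) {s w : ℤ} (hs : s ∈ steps t) (hw : w = u + s) : (f u : ℕ) ≠ f w :=
    hw ▸ Fin.val_injective.ne (hf.ne_of_adj (distG_adj_add h0 u hs))
  have hnot_both_two (u : ℤ) {s s' w : ℤ} (hs : s ∈ steps t) (hs' : s' ∈ steps t)
      (hw : w = u + s + s') (huw : u ≠ w) (hu : (f u : ℕ) = 2) : (f w : ℕ) ≠ 2 :=
    hw ▸ (hf.lt_two_of_dist_le_two hk (hw ▸ huw)
      (distG_dist_add_add_le_two h0 u hs hs') hu.ge).ne
  have mem_steps : (2 : ℤ) ∈ steps t ∧ t ∈ steps t ∧ -t ∈ steps t := by simp [steps]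
  obtain ⟨c, hc⟩ := exists_checkerboard_of_ladder
    (A := fun n => f (2 * n)) (B := fun n => f (2 * n + t)) (fun _ => hle _) (fun _ => hle _)
    (fun n => hne _ mem_steps.2.1 rfl)
    (fun n => hne _ mem_steps.1 (by push_cast; ring))
    (fun n => hne _ mem_steps.1 (by push_cast; ring))
    (fun n => hnot_both_two _ mem_steps.1 mem_steps.2.1 (by push_cast; ring) (by omega))
    (fun n => hnot_both_two _ mem_steps.2.2 mem_steps.1 (by push_cast; ring) (by omega))
  have twist (j : ℕ) : (f (t + 2 * j) : ℕ) = 2 ∨ (f (2 * t + 2 * j) : ℕ) = 2 := by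
    have hB := (hc j).2
    have hA := (hc (j + (2 * m + 1))).1
    have hrung := hne (t + 2 * j) mem_steps.2.1 (w := 2 * t + 2 * j) (by ring)
    simp only [show 2 * (j : ℤ) + t = t + 2 * j by ring,
      show 2 * ((j + (2 * m + 1) : ℕ) : ℤ) = 2 * t + 2 * j by push_cast; omega] at hA hB
    omega
  obtain ⟨x, hx, hx'⟩ := exists_mem_add_two_or_add_four_mem (H := {v | (f v : ℕ) = 2})
    (a := t) (b := 2 * t) (by simpa using twist 0) (by simpa using twist 1)
    (by simpa using twist 2)
  rcases hx' with hx' | hx'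
  · exact hne x mem_steps.1 rfl (hx.trans hx'.symm)
  · exact hnot_both_two x mem_steps.1 mem_steps.1 (by ring) (by omega) hx hx'

def IsPackingPattern {N k : ℕ} (τ : ZMod N) (p : ZMod N → Fin k) : Prop :=
  ∀ a, ((p a : ℕ) < 2 → ∀ s ∈ steps τ, p a ≠ p (a + s)) ∧
    (2 ≤ (p a : ℕ) → ∀ s ∈ steps τ ++ twoSteps τ, p a ≠ p (a + s))

theorem IsPackingPattern.isPackingColoring {t : ℤ} {N k : ℕ} {p : ZMod N → Fin k} (ht : Odd t)
    (h0 : 0 < t) (hp : IsPackingPattern (t : ZMod N) p) :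
    IsPackingColoring (distG t) fun u : ℤ => p u := by
  have hcast {l : List ℤ} {u v : ℤ} (h : v - u ∈ l) :
      ∃ s ∈ l.map (Int.castRingHom (ZMod N)), (v : ZMod N) = u + s :=
    ⟨_, List.mem_map_of_mem h, by simp⟩
  intro u v hne huv
  constructor
  · intro hu hadj
    obtain ⟨s, hs, hv⟩ := hcast ((distG_adj_iff h0).mp hadj)
    rw [map_steps] at hs
    exact (hp u).1 hu s hs (hv ▸ huv)
  · intro hu
    by_contra! hd
    obtain ⟨s, hs, hv⟩ := hcast (sub_mem_of_distG_dist_le_two ht h0 hne hd)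
    rw [List.map_append, map_steps, map_twoSteps] at hs
    exact (hp u).2 hu s hs (hv ▸ huv)

def patternPmOne : ZMod 10 → Fin 4 := ![0, 1, 2, 0, 3, 1, 0, 2, 1, 3]

def patternPmThree : ZMod 10 → Fin 4 := ![0, 0, 1, 1, 2, 0, 0, 1, 1, 3]

def patternFive : ZMod 20 → Fin 4 := ![0, 0, 1, 1, 0, 2, 1, 0, 0, 1, 3, 0, 1, 2, 0, 1, 1, 0, 3, 1]

theorem isPackingPattern_patternPmOne : ∀ τ : ZMod 10, τ.val = 1 ∨ τ.val = 9 →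
    IsPackingPattern τ patternPmOne := by
  unfold IsPackingPattern; decide

theorem isPackingPattern_patternPmThree : ∀ τ : ZMod 10, τ.val = 3 ∨ τ.val = 7 →
    IsPackingPattern τ patternPmThree := by
  unfold IsPackingPattern; decide

theorem isPackingPattern_patternFive : ∀ τ : ZMod 20, τ.val = 5 ∨ τ.val = 15 →
    IsPackingPattern τ patternFive := by
  unfold IsPackingPattern; decide

theorem exists_isPackingColoring_distG {t : ℤ} (ht : Odd t) (h0 : 0 < t) :
    ∃ f : ℤ → Fin 4, IsPackingColoring (distG t) f := by
  have hval (N : ℕ) [NeZero N] : ((t : ZMod N).val : ℤ) = t % N := ZMod.val_intCast t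
  have h10 := hval 10
  have h20 := hval 20
  have h2 := Int.odd_iff.mp ht
  by_cases hB : t % 10 = 1 ∨ t % 10 = 9
  · exact ⟨_, (isPackingPattern_patternPmOne _ (by omega)).isPackingColoring ht h0⟩
  by_cases hC : t % 10 = 3 ∨ t % 10 = 7
  · exact ⟨_, (isPackingPattern_patternPmThree _ (by omega)).isPackingColoring ht h0⟩
  · exact ⟨_, (isPackingPattern_patternFive _ (by omega)).isPackingColoring ht h0⟩

theorem stmt5 (t : ℤ) (ht : Odd t) (h3 : 3 ≤ t) :
    IsLeast {k : ℕ | ∃ f : ℤ → Fin k, ∀ u v : ℤ, u ≠ v → f u = f v →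
      ((f u : ℕ) < 2 → ¬ (distG t).Adj u v) ∧ (2 ≤ (f u : ℕ) → 2 < (distG t).dist u v)} 4 :=
  ⟨exists_isPackingColoring_distG ht (by omega),
    fun _ ⟨_, hf⟩ => IsPackingColoring.four_le ht (by omega) hf⟩
end

section
/- In G(ℤ,{2,3}), no (1,2,2,2,2)-packing coloring can assign color 1 to two consecutive integers i and i+1. -/
lemma SimpleGraph.dist_le_two_of_adj_of_adj {V : Type*} {G : SimpleGraph V} {u v w : V}
    (huv : G.Adj u v) (hvw : G.Adj v w) : G.dist u w ≤ 2 :=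
  G.dist_le (.cons huv hvw.toWalk)

/-- Colour `0` is the paper's colour 1, the independent class. -/
def IsOneTwoPackingColoring {V : Type*} {n : ℕ} (G : SimpleGraph V) (f : V → Fin n) : Prop :=
  ∀ u v : V, u ≠ v → f u = f v →
    ((f u : ℕ) = 0 → ¬ G.Adj u v) ∧ (1 ≤ (f u : ℕ) → 2 < G.dist u v)

namespace IsOneTwoPackingColoring

variable {V : Type*} {n : ℕ} [NeZero n] {G : SimpleGraph V} {f : V → Fin n}

lemma ne_zero_of_adj (hf : IsOneTwoPackingColoring G f) {u v : V} (huv : G.Adj u v)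
    (hv : f v = 0) : f u ≠ 0 := fun hu =>
  (hf u v huv.ne (hu.trans hv.symm)).1 (Fin.val_eq_zero_iff.2 hu) huv

lemma injOn_of_pairwise_dist_le_two (hf : IsOneTwoPackingColoring G f) {S : Set V}
    (hS₀ : ∀ v ∈ S, f v ≠ 0) (hS : S.Pairwise fun u v => G.dist u v ≤ 2) : S.InjOn f := by
  intro u hu v hv huv
  by_contra hne
  have hpos : 1 ≤ (f u : ℕ) := Nat.one_le_iff_ne_zero.2 (Fin.val_ne_zero_iff.2 (hS₀ u hu))
  exact (hS hu hv hne).not_gt ((hf u v hne huv).2 hpos)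

lemma card_le_of_pairwise_dist_le_two (hf : IsOneTwoPackingColoring G f) {S : Finset V}
    (hS₀ : ∀ v ∈ S, f v ≠ 0) (hS : (S : Set V).Pairwise fun u v => G.dist u v ≤ 2) :
    S.card ≤ n - 1 := by
  calc S.card ≤ (Finset.univ.erase (0 : Fin n)).card :=
        Finset.card_le_card_of_injOn f (fun v hv => Finset.mem_erase.2 ⟨hS₀ v hv, by simp⟩)
          (hf.injOn_of_pairwise_dist_le_two hS₀ hS)
    _ = n - 1 := by simp

end IsOneTwoPackingColoring

lemma distG_adj_iff_s8 {t : ℤ} (ht : 0 < t) {a b : ℤ} :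
    (distG t).Adj a b ↔ a - b = 2 ∨ a - b = -2 ∨ a - b = t ∨ a - b = -t := by
  simp only [distG, SimpleGraph.fromRel_adj, abs_sub_comm b a, or_self]
  rcases abs_cases (a - b) with ⟨h, _⟩ | ⟨h, _⟩ <;> rw [h] <;> constructor <;> omega

lemma distG_three_dist_le_two {a b : ℤ} (hne : a ≠ b) (h : |a - b| ≤ 6) :
    (distG 3).dist a b ≤ 2 := by
  wlog hlt : a < b generalizing a b
  · rw [SimpleGraph.dist_comm]
    exact this hne.symm (by rwa [abs_sub_comm]) (by omega)
  have hadj : ∀ x y : ℤ, (x - y = 2 ∨ x - y = -2 ∨ x - y = 3 ∨ x - y = -3) →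
      (distG 3).Adj x y :=
    fun _ _ => (distG_adj_iff_s8 three_pos).2
  have hle := (abs_le.1 h).1
  obtain h | h | h :
      (b - a = 2 ∨ b - a = 3) ∨ (b - a = 1 ∨ b - a = 6) ∨ (b - a = 4 ∨ b - a = 5) := by
    omega
  · exact (SimpleGraph.dist_eq_one_iff_adj.2 (hadj a b (by omega))).le.trans one_le_two
  · exact SimpleGraph.dist_le_two_of_adj_of_adj (hadj a (a + 3) (by omega)) (hadj _ b (by omega))
  · exact SimpleGraph.dist_le_two_of_adj_of_adj (hadj a (a + 2) (by omega)) (hadj _ b (by omega))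

theorem stmt8 (f : ℤ → Fin 5)
    (hf : ∀ u v : ℤ, u ≠ v → f u = f v →
      ((f u : ℕ) = 0 → ¬ (distG 3).Adj u v) ∧ (1 ≤ (f u : ℕ) → 2 < (distG 3).dist u v)) :
    ∀ i : ℤ, ¬ (f i = 0 ∧ f (i + 1) = 0) := by
  rintro i ⟨hi, hi₁⟩
  have hcol : IsOneTwoPackingColoring (distG 3) f := hf
  set S : Finset ℤ := {i - 2, i - 1, i + 2, i + 3, i + 4} with hS_def
  have hS_adj : ∀ v ∈ S, (distG 3).Adj v i ∨ (distG 3).Adj v (i + 1) := by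
    intro v hv
    simp only [hS_def, Finset.mem_insert, Finset.mem_singleton] at hv
    simp only [distG_adj_iff_s8 three_pos]
    omega
  have hS₀ : ∀ v ∈ S, f v ≠ 0 := fun v hv =>
    (hS_adj v hv).elim (hcol.ne_zero_of_adj · hi) (hcol.ne_zero_of_adj · hi₁)
  have hS_dist : (S : Set ℤ).Pairwise fun u v => (distG 3).dist u v ≤ 2 := by
    intro u hu v hv huv
    simp only [hS_def, Finset.coe_insert, Finset.coe_singleton, Set.mem_insert_iff,
      Set.mem_singleton_iff] at hu hv
    exact distG_three_dist_le_two huv (abs_le.2 ⟨by omega, by omega⟩)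
  have hS_card : S.card = 5 := by
    repeat rw [Finset.card_insert_of_notMem (by simp; omega)]
    simp
  have := hcol.card_le_of_pairwise_dist_le_two hS₀ hS_dist
  omega
end

section
/- In G(ℤ,{2,t}) with t ≥ 3 odd and d ≥ (t+1)/2, every integer y with 1 ≤ y ≤ t(d − (t−3)/2) satisfies d_{G}(0, y) ≤ d. -/
lemma distG_adj_step (t x s : ℤ) (hs : |s| = 2 ∨ |s| = t) (hs0 : s ≠ 0) :
    (distG t).Adj x (x + s) := by
  rw [distG, SimpleGraph.fromRel_adj]
  refine ⟨by intro h; apply hs0; linarith [h], Or.inl ?_⟩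
  have h : x - (x + s) = -s := by ring
  rw [h, abs_neg]
  exact hs

lemma distG_walk_mul (t s : ℤ) (hs : |s| = 2 ∨ |s| = t) (hs0 : s ≠ 0) :
    ∀ (n : ℕ) (x : ℤ), ∃ p : (distG t).Walk x (x + n * s), p.length = n := by
  intro n
  induction n with
  | zero =>
    intro x
    exact ⟨SimpleGraph.Walk.nil.copy rfl (by push_cast; ring), by simp⟩
  | succ n ih =>
    intro x
    obtain ⟨p, hp⟩ := ih (x + s)
    refine ⟨(SimpleGraph.Walk.cons (distG_adj_step t x s hs hs0) p).copy rfl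
      (by push_cast; ring), ?_⟩
    simp [hp]

lemma distG_key (t d y j a s : ℤ) (h3 : 3 ≤ t) (hj : 0 ≤ j) (ha : 0 ≤ a)
    (hs : s = 2 ∨ s = -2) (hy : y = j * t + a * s) (hda : j + a ≤ d) :
    ((distG t).dist 0 y : ℤ) ≤ d := by
  have ht0 : t ≠ 0 := by omega
  have hsabs : |s| = 2 := by rcases hs with h | h <;> simp [h]
  have hs0 : s ≠ 0 := by rcases hs with h | h <;> simp [h]
  obtain ⟨p, hp⟩ := distG_walk_mul t t (Or.inr (abs_of_pos (by omega))) ht0 j.toNat 0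
  obtain ⟨q, hq⟩ := distG_walk_mul t s (Or.inl hsabs) hs0 a.toNat (0 + (j.toNat : ℤ) * t)
  have hjc : (j.toNat : ℤ) = j := Int.toNat_of_nonneg hj
  have hac : (a.toNat : ℤ) = a := Int.toNat_of_nonneg ha
  have hdist := SimpleGraph.dist_le ((p.append q).copy rfl
    (show 0 + (j.toNat : ℤ) * t + (a.toNat : ℤ) * s = y by rw [hjc, hac, hy]; ring))
  rw [SimpleGraph.Walk.length_copy, SimpleGraph.Walk.length_append, hp, hq] at hdist
  have : ((distG t).dist 0 y : ℤ) ≤ ((j.toNat + a.toNat : ℕ) : ℤ) := by exact_mod_cast hdist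
  push_cast [hjc, hac] at this
  omega

theorem stmt13 (t d : ℤ) (ht : Odd t) (h3 : 3 ≤ t) (hd : (t + 1) / 2 ≤ d) :
    ∀ y : ℤ, 1 ≤ y → y ≤ t * (d - (t - 3) / 2) → ((distG t).dist 0 y : ℤ) ≤ d := by
  obtain ⟨u, hu⟩ := ht
  intro y hy1 hy2
  have ht1 : t = 2 * u + 1 := by omega
  have hu1 : 1 ≤ u := by omega
  have hd' : u + 1 ≤ d := by omega
  set r := y % t with hr
  set q := y / t with hq
  have hyqr : t * q + r = y := Int.mul_ediv_add_emod y t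
  have hr0 : 0 ≤ r := Int.emod_nonneg y (by omega)
  have hrt : r < t := Int.emod_lt_of_pos y (by omega)
  have he : d - (t - 3) / 2 = d - (u - 1) := by omega
  rw [he] at hy2
  have hq0 : 0 ≤ q := Int.ediv_nonneg (by omega) (by omega)
  set c := d - (u - 1) with hc
  have hqc : q ≤ c := by
    by_contra h
    push_neg at h
    have h2 : t * (c + 1) ≤ t * q := by
      apply mul_le_mul_of_nonneg_left (by omega) (by omega)
    have h3' : t * (c + 1) = t * c + t := by ring
    linarith
  have hqceq : q = c → r = 0 := by
    intro h
    rw [h] at hyqr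
    have : r ≤ 0 := by linarith
    omega
  rcases Int.even_or_odd r with ⟨v, hv⟩ | ⟨v, hv⟩
  · -- r = v + v, go with j = q, a = v, s = 2
    have hv0 : 0 ≤ v := by omega
    refine distG_key t d y q v 2 h3 hq0 hv0 (Or.inl rfl) (by linarith) ?_
    rcases eq_or_lt_of_le hqc with heq | hlt
    · have := hqceq heq; omega
    · omega
  · -- r = 2v + 1
    have hqlt : q < c := by
      rcases eq_or_lt_of_le hqc with heq | hlt
      · have := hqceq heq; omega
      · exact hlt
    have hv0 : 0 ≤ v := by omega
    have hvu : v ≤ u - 1 := by omega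
    by_cases hv1 : 1 ≤ v
    · -- j = q + 1, a = u - v, s = -2
      refine distG_key t d y (q + 1) (u - v) (-2) h3 (by omega) (by omega)
        (Or.inr rfl) (by linear_combination (-1 : ℤ) * hyqr + hv - ht1) (by omega)
    · -- v = 0, r = 1
      have hv0' : v = 0 := by omega
      by_cases hq1 : 1 ≤ q
      · -- j = q - 1, a = u + 1, s = 2
        refine distG_key t d y (q - 1) (u + 1) 2 h3 (by omega) (by omega)
          (Or.inl rfl) (by linear_combination (-1 : ℤ) * hyqr + hv + ht1 + 2 * hv0') (by omega)
      · -- q = 0, y = 1 : j = 1, a = u, s = -2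
        have hq0' : q = 0 := by omega
        have hy1' : y = 1 := by rw [hq0'] at hyqr; omega
        refine distG_key t d y 1 u (-2) h3 (by omega) (by omega)
          (Or.inr rfl) (by rw [hy1']; linarith) (by omega)
end

section
/- For every integer d ≥ 2, the d-distance chromatic number of G(ℤ,{2,3}) equals 3d + 1. -/
open SimpleGraph

lemma adjG' (u v : ℤ) (h : v - u = 2 ∨ v - u = 3 ∨ u - v = 2 ∨ u - v = 3) :
    (distG 3).Adj u v := by
  rw [distG, SimpleGraph.fromRel_adj]
  refine ⟨by rintro rfl; omega, Or.inl ?_⟩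
  rcases h with h | h | h | h
  · left; rw [abs_eq (by norm_num)]; omega
  · right; rw [abs_eq (by norm_num)]; omega
  · left; rw [abs_eq (by norm_num)]; omega
  · right; rw [abs_eq (by norm_num)]; omega

lemma walk_aux : ∀ n : ℕ, 2 ≤ n → ∀ u v : ℤ, u ≤ v → v - u ≤ 3 * n →
    ∃ p : (distG 3).Walk u v, p.length ≤ n := by
  intro n
  induction n using Nat.strong_induction_on with
  | _ n ih =>
    intro hn u v huv hm
    rcases eq_or_lt_of_le huv with rfl | hlt
    · exact ⟨.nil, by simp⟩
    by_cases h7 : v - u ≤ 6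
    · have hcases : v = u + 1 ∨ v = u + 2 ∨ v = u + 3 ∨ v = u + 4 ∨ v = u + 5 ∨ v = u + 6 := by
        omega
      rcases hcases with rfl | rfl | rfl | rfl | rfl | rfl
      · exact ⟨.cons (adjG' u (u + 3) (by omega))
          (.cons (adjG' (u + 3) (u + 1) (by omega)) .nil), by simp [hn]⟩
      · exact ⟨.cons (adjG' u (u + 2) (by omega)) .nil, by simp; omega⟩
      · exact ⟨.cons (adjG' u (u + 3) (by omega)) .nil, by simp; omega⟩
      · exact ⟨.cons (adjG' u (u + 2) (by omega))
          (.cons (adjG' (u + 2) (u + 4) (by omega)) .nil), by simp [hn]⟩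
      · exact ⟨.cons (adjG' u (u + 2) (by omega))
          (.cons (adjG' (u + 2) (u + 5) (by omega)) .nil), by simp [hn]⟩
      · exact ⟨.cons (adjG' u (u + 3) (by omega))
          (.cons (adjG' (u + 3) (u + 6) (by omega)) .nil), by simp [hn]⟩
    · have hn3 : 3 ≤ n := by omega
      obtain ⟨p, hp⟩ := ih (n - 1) (by omega) (by omega) (u + 3) v (by omega) (by omega)
      exact ⟨.cons (adjG' u (u + 3) (by omega)) p, by
        simp only [SimpleGraph.Walk.length_cons]; omega⟩

lemma exists_walk (n : ℕ) (hn : 2 ≤ n) (u v : ℤ) (h : |u - v| ≤ 3 * n) :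
    ∃ p : (distG 3).Walk u v, p.length ≤ n := by
  obtain ⟨h1, h2⟩ := abs_le.mp h
  rcases le_total u v with h' | h'
  · exact walk_aux n hn u v h' (by omega)
  · obtain ⟨p, hp⟩ := walk_aux n hn v u h' (by omega)
    exact ⟨p.reverse, by simpa using hp⟩

lemma reachG (u v : ℤ) : (distG 3).Reachable u v := by
  set a := |u - v| with ha
  have ha0 : 0 ≤ a := abs_nonneg _
  obtain ⟨p, _⟩ := exists_walk (2 + a.toNat) (by omega) u v (by omega)
  exact ⟨p⟩

lemma abs_le_walk {u v : ℤ} (p : (distG 3).Walk u v) : |u - v| ≤ 3 * p.length := by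
  induction p with
  | nil => simp
  | @cons u w v h p ih =>
    have h3 : |u - w| ≤ 3 := by
      rw [distG, SimpleGraph.fromRel_adj] at h
      rcases h.2 with (h | h) | (h | h) <;>
        simp only [abs_sub_comm w u] at * <;> omega
    have htri : |u - v| ≤ |u - w| + |w - v| := abs_sub_le u w v
    simp only [SimpleGraph.Walk.length_cons]
    push_cast
    linarith

theorem stmt16 (d : ℕ) (hd : 2 ≤ d) :
    IsLeast {k : ℕ | ∃ f : ℤ → Fin k, ∀ u v : ℤ, u ≠ v → f u = f v →
      d < (distG 3).dist u v} (3 * d + 1) := by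
  constructor
  · -- membership: color by residues mod 3d+1
    refine ⟨fun i => ⟨(i % ((3 * d + 1 : ℕ) : ℤ)).toNat, ?_⟩, ?_⟩
    · have hpos : (0 : ℤ) < ((3 * d + 1 : ℕ) : ℤ) := by positivity
      have h1 := Int.emod_nonneg i (ne_of_gt hpos)
      have h2 := Int.emod_lt_of_pos i hpos
      omega
    · intro u v huv hfeq
      have hpos : (0 : ℤ) < ((3 * d + 1 : ℕ) : ℤ) := by positivity
      have h1u := Int.emod_nonneg u (ne_of_gt hpos)
      have h1v := Int.emod_nonneg v (ne_of_gt hpos)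
      have hmod : u % ((3 * d + 1 : ℕ) : ℤ) = v % ((3 * d + 1 : ℕ) : ℤ) := by
        have := congrArg Fin.val hfeq
        simp only at this
        omega
      have hdvd : ((3 * d + 1 : ℕ) : ℤ) ∣ (u - v) :=
        Int.dvd_of_emod_eq_zero (Int.emod_eq_emod_iff_emod_sub_eq_zero.mp hmod)
      have habs : ((3 * d + 1 : ℕ) : ℤ) ≤ |u - v| :=
        Int.le_of_dvd (abs_pos.mpr (sub_ne_zero.mpr huv)) ((dvd_abs _ _).mpr hdvd)
      obtain ⟨p, hp⟩ := (reachG u v).exists_walk_length_eq_dist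
      have hw := abs_le_walk p
      rw [hp] at hw
      have : ((3 * d + 1 : ℕ) : ℤ) ≤ 3 * ((distG 3).dist u v : ℤ) := le_trans habs hw
      omega
  · -- lower bound
    rintro k ⟨f, hf⟩
    have hinj : Function.Injective (fun i : Fin (3 * d + 1) => f ((i : ℕ) : ℤ)) := by
      intro i j hij
      by_contra hne
      have hZ : ((i : ℕ) : ℤ) ≠ ((j : ℕ) : ℤ) := by
        intro h
        exact hne (Fin.ext (by exact_mod_cast h))
      have hdlt := hf _ _ hZ hij
      have hi := i.isLt
      have hj := j.isLt
      obtain ⟨p, hp⟩ := exists_walk d hd ((i : ℕ) : ℤ) ((j : ℕ) : ℤ)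
        (by rw [abs_le]; omega)
      have := SimpleGraph.dist_le p
      omega
    have := Fintype.card_le_of_injective _ hinj
    simpa using this
end

section
/- If t ≥ 5 is odd and d ≥ t − 3, then the d-distance chromatic number of G(ℤ,{2,t}) equals exactly 1 + t(d − (t−3)/2); moreover the periodic coloring assigning colors 1,2,…,ℓ cyclically (ℓ = 1 + t(d−(t−3)/2)) is a valid d-distance coloring, since d_G(0, ℓ) ≥ d + 1. -/
lemma distG_adj {t u v : ℤ} : (distG t).Adj u v ↔ u ≠ v ∧ (|u - v| = 2 ∨ |u - v| = t) := by
  unfold distG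
  rw [SimpleGraph.fromRel_adj]
  rw [abs_sub_comm v u]
  tauto

lemma adj_two {t u : ℤ} : (distG t).Adj u (u + 2) := by
  rw [distG_adj]
  constructor
  · intro h; omega
  · left; rw [show u - (u+2) = -2 by ring]; decide

lemma adj_t {t u : ℤ} (h5 : 5 ≤ t) : (distG t).Adj u (u + t) := by
  rw [distG_adj]
  refine ⟨by intro h; omega, Or.inr ?_⟩
  rw [show u - (u+t) = -t by ring, abs_neg, abs_of_nonneg (by omega)]

lemma adj_two' {t u : ℤ} : (distG t).Adj u (u - 2) := by
  rw [distG_adj]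
  constructor
  · intro h; omega
  · left; rw [show u - (u-2) = 2 by ring]; decide

lemma adj_t' {t u : ℤ} (h5 : 5 ≤ t) : (distG t).Adj u (u - t) := by
  rw [distG_adj]
  refine ⟨by intro h; omega, Or.inr ?_⟩
  rw [show u - (u-t) = t by ring, abs_of_nonneg (by omega)]

lemma walk_exists {t : ℤ} (h5 : 5 ≤ t) :
    ∀ (n : ℕ) (x y u : ℤ), x.natAbs + y.natAbs = n →
    ∃ w : (distG t).Walk u (u + 2*x + t*y), w.length = n := by
  intro n
  induction n with
  | zero =>
    intro x y u h
    have hx : x = 0 := by omega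
    have hy : y = 0 := by omega
    subst hx; subst hy
    exact ⟨SimpleGraph.Walk.nil.copy rfl (by ring), by simp⟩
  | succ n ih =>
    intro x y u h
    rcases (show 1 ≤ x ∨ x ≤ -1 ∨ 1 ≤ y ∨ y ≤ -1 by omega) with hx | hx | hy | hy
    · obtain ⟨w, hw⟩ := ih (x - 1) y (u + 2) (by omega)
      refine ⟨(SimpleGraph.Walk.cons adj_two w).copy rfl (by ring), by simp [hw]⟩
    · obtain ⟨w, hw⟩ := ih (x + 1) y (u - 2) (by omega)
      refine ⟨(SimpleGraph.Walk.cons adj_two' w).copy rfl (by ring), by simp [hw]⟩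
    · obtain ⟨w, hw⟩ := ih x (y - 1) (u + t) (by omega)
      refine ⟨(SimpleGraph.Walk.cons (adj_t h5) w).copy rfl (by ring), by simp [hw]⟩
    · obtain ⟨w, hw⟩ := ih x (y + 1) (u - t) (by omega)
      refine ⟨(SimpleGraph.Walk.cons (adj_t' h5) w).copy rfl (by ring), by simp [hw]⟩

lemma dist_le_comb {t : ℤ} (h5 : 5 ≤ t) (u x y : ℤ) :
    (distG t).dist u (u + 2*x + t*y) ≤ x.natAbs + y.natAbs := by
  obtain ⟨w, hw⟩ := walk_exists h5 (x.natAbs + y.natAbs) x y u rfl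
  exact hw ▸ SimpleGraph.dist_le w

lemma reachable {t : ℤ} (ht : Odd t) (h5 : 5 ≤ t) (u v : ℤ) : (distG t).Reachable u v := by
  obtain ⟨k, hk⟩ := ht
  obtain ⟨w, -⟩ := walk_exists h5 ((-k*(v-u)).natAbs + (v-u).natAbs) (-k*(v-u)) (v-u) u rfl
  exact ⟨w.copy rfl (by rw [hk]; ring)⟩

lemma walk_comb {t : ℤ} : ∀ {u v : ℤ} (w : (distG t).Walk u v),
    ∃ x y : ℤ, 2*x + t*y = v - u ∧ x.natAbs + y.natAbs ≤ w.length := by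
  intro u v w
  induction w with
  | nil => exact ⟨0, 0, by ring, by simp⟩
  | @cons a b c h p ih =>
    obtain ⟨x, y, hxy, hle⟩ := ih
    rw [distG_adj] at h
    obtain ⟨hne, h2 | h2⟩ := h
    · rcases abs_eq (by norm_num : (0:ℤ) ≤ 2) |>.mp h2 with h3 | h3
      · exact ⟨x - 1, y, by omega, by simp only [SimpleGraph.Walk.length_cons]; omega⟩
      · exact ⟨x + 1, y, by omega, by simp only [SimpleGraph.Walk.length_cons]; omega⟩
    · have ht0 : (0:ℤ) ≤ t := by
        have := abs_nonneg (a - b); rw [h2] at this; exact this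
      rcases (abs_eq ht0).mp h2 with h3 | h3
      · refine ⟨x, y - 1, by linarith, by simp only [SimpleGraph.Walk.length_cons]; omega⟩
      · refine ⟨x, y + 1, by linarith, by simp only [SimpleGraph.Walk.length_cons]; omega⟩

lemma dist_comb {t : ℤ} (ht : Odd t) (h5 : 5 ≤ t) (u v : ℤ) :
    ∃ x y : ℤ, 2*x + t*y = v - u ∧ x.natAbs + y.natAbs ≤ (distG t).dist u v := by
  obtain ⟨w, hw⟩ := (reachable ht h5 u v).exists_walk_length_eq_dist
  obtain ⟨x, y, hxy, hle⟩ := walk_comb w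
  exact ⟨x, y, hxy, by omega⟩

lemma key_one {t s m x y : ℤ} (hts : t = 2*s+3) (hs : 1 ≤ s) (hm : s ≤ m)
    (hcomb : 2*x + t*y = 1 + t*m) : m + s + 1 ≤ |x| + |y| := by
  set w : ℤ := m - y with hw
  have htw : t*w = 2*x - 1 := by rw [hw, mul_sub]; linarith
  have hwodd : w ≠ 0 := by intro h0; rw [h0, mul_zero] at htw; omega
  have hx1 : x ≤ |x| := le_abs_self x
  have hx2 : -x ≤ |x| := neg_le_abs x
  have hy1 : y ≤ |y| := le_abs_self y
  have hy2 : -y ≤ |y| := neg_le_abs y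
  rcases (show 1 ≤ w ∨ w ≤ -1 by omega) with hw1 | hw1
  · have h1 : (t-2)*1 ≤ (t-2)*w := mul_le_mul_of_nonneg_left hw1 (by omega)
    linarith
  · have h1 : (t+2)*1 ≤ (t+2)*(-w) := mul_le_mul_of_nonneg_left (by omega) (by omega)
    linarith

lemma key_lb {t s m x y n L : ℤ} (hts : t = 2*s+3) (hs : 1 ≤ s) (hm : s ≤ m)
    (hL : L = 1 + t*m) (hcomb : 2*x + t*y = n) (hdvd : L ∣ n) (hn0 : n ≠ 0) :
    m + s + 1 ≤ |x| + |y| := by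
  obtain ⟨c, hc⟩ := hdvd
  have hc0 : c ≠ 0 := by rintro rfl; rw [mul_zero] at hc; exact hn0 hc
  have htm : t*s ≤ t*m := mul_le_mul_of_nonneg_left hm (by omega)
  have hts' : t*1 ≤ t*s := mul_le_mul_of_nonneg_left hs (by omega)
  have hL0 : 0 < L := by linarith
  rcases (show c = 1 ∨ c = -1 ∨ c ≤ -2 ∨ 2 ≤ c by omega) with rfl | rfl | hc2 | hc2
  · exact key_one hts hs hm (by rw [hcomb, hc, hL]; ring)
  · have := key_one hts hs hm (x := -x) (y := -y) (by rw [hc, hL] at hcomb; linarith)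
    rwa [abs_neg, abs_neg] at this
  all_goals {
    have habs : 2 ≤ |c| := by
      rcases abs_cases c with ⟨h, _⟩ | ⟨h, _⟩ <;> omega
    have h1 : |n| = L * |c| := by rw [hc, abs_mul, abs_of_pos hL0]
    have h2 : L * 2 ≤ L * |c| := mul_le_mul_of_nonneg_left habs (le_of_lt hL0)
    have h3 : |n| ≤ 2*|x| + t*|y| := by
      calc |n| = |2*x + t*y| := by rw [hcomb]
      _ ≤ |2*x| + |t*y| := abs_add_le _ _
      _ = 2*|x| + t*|y| := by
          rw [abs_mul, abs_mul, abs_of_nonneg (show (0:ℤ) ≤ 2 by norm_num),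
            abs_of_nonneg (show (0:ℤ) ≤ t by omega)]
    have hxa : 0 ≤ |x| := abs_nonneg x
    have hya : 0 ≤ |y| := abs_nonneg y
    by_contra hcon
    push_neg at hcon
    have h4 : |x| + |y| ≤ m + s := by omega
    have h5 : t*(|x|+|y|) ≤ t*(m+s) := mul_le_mul_of_nonneg_left h4 (by omega)
    have h7 : 0 ≤ (t-2)*|x| := mul_nonneg (by omega) hxa
    linarith }

lemma ub_rep {t s m n : ℤ} (hts : t = 2*s+3) (hs : 1 ≤ s) (hm : 2 ≤ m)
    (h1 : 1 ≤ n) (h2 : n ≤ t*m) :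
    ∃ x y : ℤ, 2*x + t*y = n ∧ |x| + |y| ≤ m + s := by
  set q : ℤ := n / t with hq
  set r : ℤ := n % t with hr
  have ht0 : 0 < t := by omega
  have hqr : n = t*q + r := by rw [hq, hr]; exact (Int.mul_ediv_add_emod n t).symm
  have hr0 : 0 ≤ r := Int.emod_nonneg n (by omega)
  have hrt : r < t := Int.emod_lt_of_pos n ht0
  have hq0 : 0 ≤ q := Int.ediv_nonneg (by omega) (by omega)
  have hqm : q ≤ m := by
    by_contra hcon
    push_neg at hcon
    have : t*(m+1) ≤ t*q := mul_le_mul_of_nonneg_left (by omega) (by omega)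
    linarith
  have hqcase : q ≤ m - 1 ∨ (q = m ∧ r = 0) := by
    rcases eq_or_lt_of_le hqm with hqe | hql
    · have h3 : t*q = t*m := by rw [hqe]
      right
      exact ⟨hqe, by linarith⟩
    · left; omega
  rcases Int.even_or_odd r with ⟨rh, hrh⟩ | ⟨rh, hrh⟩
  · refine ⟨rh, q, by linarith, ?_⟩
    rw [abs_of_nonneg (by omega), abs_of_nonneg hq0]
    rcases hqcase with h | ⟨h, h'⟩ <;> omega
  · have hqm1 : q ≤ m - 1 := by
      rcases hqcase with h | ⟨h, h'⟩
      · exact h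
      · omega
    rcases (show (r = 1 ∧ q = 0) ∨ (r = 1 ∧ 1 ≤ q) ∨ 3 ≤ r by omega) with ⟨hr1, hq'⟩ | ⟨hr1, hq'⟩ | hr3
    · have hq'' : t*q = 0 := by rw [hq', mul_zero]
      refine ⟨-(s+1), 1, by linarith, ?_⟩
      rw [abs_of_nonpos (by omega), abs_one]
      omega
    · refine ⟨s+2, q-1, by linarith, ?_⟩
      rw [abs_of_nonneg (by omega), abs_of_nonneg (by omega)]
      omega
    · refine ⟨rh - s - 1, q + 1, by linarith, ?_⟩
      rw [abs_of_nonpos (by omega), abs_of_nonneg (by omega)]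
      omega

lemma W2 (g1 g2 o1 o2 : ℤ)
    (q1 : 0 ≤ o1) (q1' : o1 ≤ 1) (a1 : g1 ≥ 6 - 5*o1) (p1 : g1 ≥ 1) (q2 : 0 ≤ o2) (q2' : o2 ≤ 1) (a2 : g2 ≥ 6 - 5*o2) (p2 : g2 ≥ 1) (b1 : o1 + o2 ≤ 1) (c1 : g1 ≥ 8*o2) (e1 : g2 ≥ 8*o1) :
    g1+g2 ≥ 9 := by

  omega

lemma W3 (g1 g2 g3 o1 o2 o3 : ℤ)
    (q1 : 0 ≤ o1) (q1' : o1 ≤ 1) (a1 : g1 ≥ 6 - 5*o1) (p1 : g1 ≥ 1) (q2 : 0 ≤ o2) (q2' : o2 ≤ 1) (a2 : g2 ≥ 6 - 5*o2) (p2 : g2 ≥ 1) (q3 : 0 ≤ o3) (q3' : o3 ≤ 1) (a3 : g3 ≥ 6 - 5*o3) (p3 : g3 ≥ 1) (b1 : o1 + o2 ≤ 1) (c1 : g1 ≥ 8*o2) (e1 : g2 ≥ 8*o1) (b2 : o2 + o3 ≤ 1) (c2 : g2 ≥ 8*o3) (e2 : g3 ≥ 8*o2) (f1 : g2 ≥ 11*o1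 + 11*o3 - 11) :
    g1+g2+g3 ≥ 13 := by
  have w2_1 := W2 g1 g2 o1 o2 q1 q1' a1 p1 q2 q2' a2 p2 b1 c1 e1
  have w2_2 := W2 g2 g3 o2 o3 q2 q2' a2 p2 q3 q3' a3 p3 b2 c2 e2
  omega

lemma W4 (g1 g2 g3 g4 o1 o2 o3 o4 : ℤ)
    (q1 : 0 ≤ o1) (q1' : o1 ≤ 1) (a1 : g1 ≥ 6 - 5*o1) (p1 : g1 ≥ 1) (q2 : 0 ≤ o2) (q2' : o2 ≤ 1) (a2 : g2 ≥ 6 - 5*o2) (p2 : g2 ≥ 1) (q3 : 0 ≤ o3) (q3' : o3 ≤ 1) (a3 : g3 ≥ 6 - 5*o3) (p3 : g3 ≥ 1) (q4 : 0 ≤ o4) (q4' : o4 ≤ 1) (a4 : g4 ≥ 6 - 5*o4) (p4 : g4 ≥ 1) (b1 : o1 + o2 ≤ 1) (c1 : g1 ≥ 8*o2) (e1 : g2 ≥ 8*o1) (b2 : o2 + o3 ≤ 1) (c2 : g2 ≥ 8*o3) (e2 : g3 ≥ 8*o2) (b3 : o3 + o4 ≤ 1) (c3 : g3 ≥ 8*o4)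 (e3 : g4 ≥ 8*o3) (f1 : g2 ≥ 11*o1 + 11*o3 - 11) (f2 : g3 ≥ 11*o2 + 11*o4 - 11) :
    g1+g2+g3+g4 ≥ 18 := by
  have w2_1 := W2 g1 g2 o1 o2 q1 q1' a1 p1 q2 q2' a2 p2 b1 c1 e1
  have w2_2 := W2 g2 g3 o2 o3 q2 q2' a2 p2 q3 q3' a3 p3 b2 c2 e2
  have w2_3 := W2 g3 g4 o3 o4 q3 q3' a3 p3 q4 q4' a4 p4 b3 c3 e3
  have w3_1 := W3 g1 g2 g3 o1 o2 o3 q1 q1' a1 p1 q2 q2' a2 p2 q3 q3' a3 p3 b1 c1 e1 b2 c2 e2 f1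
  have w3_2 := W3 g2 g3 g4 o2 o3 o4 q2 q2' a2 p2 q3 q3' a3 p3 q4 q4' a4 p4 b2 c2 e2 b3 c3 e3 f2
  omega

lemma W5 (g1 g2 g3 g4 g5 o1 o2 o3 o4 o5 : ℤ)
    (q1 : 0 ≤ o1) (q1' : o1 ≤ 1) (a1 : g1 ≥ 6 - 5*o1) (p1 : g1 ≥ 1) (q2 : 0 ≤ o2) (q2' : o2 ≤ 1) (a2 : g2 ≥ 6 - 5*o2) (p2 : g2 ≥ 1) (q3 : 0 ≤ o3) (q3' : o3 ≤ 1) (a3 : g3 ≥ 6 - 5*o3) (p3 : g3 ≥ 1) (q4 : 0 ≤ o4) (q4' : o4 ≤ 1) (a4 : g4 ≥ 6 - 5*o4) (p4 : g4 ≥ 1) (q5 : 0 ≤ o5) (q5' : o5 ≤ 1) (a5 : g5 ≥ 6 - 5*o5) (p5 : g5 ≥ 1) (b1 : o1 + o2 ≤ 1) (c1 : g1 ≥ 8*o2) (e1 : g2 ≥ 8*o1) (b2 : o2 + o3 ≤ 1) (c2 : g2 ≥ 8*o3) (e2 : g3 ≥ 8*o2) (b3 : o3 + o4 ≤ 1)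 (c3 : g3 ≥ 8*o4) (e3 : g4 ≥ 8*o3) (b4 : o4 + o5 ≤ 1) (c4 : g4 ≥ 8*o5) (e4 : g5 ≥ 8*o4) (f1 : g2 ≥ 11*o1 + 11*o3 - 11) (f2 : g3 ≥ 11*o2 + 11*o4 - 11) (f3 : g4 ≥ 11*o3 + 11*o5 - 11) :
    g1+g2+g3+g4+g5 ≥ 24 := by
  have w2_1 := W2 g1 g2 o1 o2 q1 q1' a1 p1 q2 q2' a2 p2 b1 c1 e1
  have w2_2 := W2 g2 g3 o2 o3 q2 q2' a2 p2 q3 q3' a3 p3 b2 c2 e2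
  have w2_3 := W2 g3 g4 o3 o4 q3 q3' a3 p3 q4 q4' a4 p4 b3 c3 e3
  have w2_4 := W2 g4 g5 o4 o5 q4 q4' a4 p4 q5 q5' a5 p5 b4 c4 e4
  have w3_1 := W3 g1 g2 g3 o1 o2 o3 q1 q1' a1 p1 q2 q2' a2 p2 q3 q3' a3 p3 b1 c1 e1 b2 c2 e2 f1
  have w3_2 := W3 g2 g3 g4 o2 o3 o4 q2 q2' a2 p2 q3 q3' a3 p3 q4 q4' a4 p4 b2 c2 e2 b3 c3 e3 f2
  have w3_3 := W3 g3 g4 g5 o3 o4 o5 q3 q3' a3 p3 q4 q4' a4 p4 q5 q5' a5 p5 b3 c3 e3 b4 c4 e4 f3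
  have w4_1 := W4 g1 g2 g3 g4 o1 o2 o3 o4 q1 q1' a1 p1 q2 q2' a2 p2 q3 q3' a3 p3 q4 q4' a4 p4 b1 c1 e1 b2 c2 e2 b3 c3 e3 f1 f2
  have w4_2 := W4 g2 g3 g4 g5 o2 o3 o4 o5 q2 q2' a2 p2 q3 q3' a3 p3 q4 q4' a4 p4 q5 q5' a5 p5 b2 c2 e2 b3 c3 e3 b4 c4 e4 f2 f3
  omega

lemma W6 (g1 g2 g3 g4 g5 g6 o1 o2 o3 o4 o5 o6 : ℤ)
    (q1 : 0 ≤ o1) (q1' : o1 ≤ 1) (a1 : g1 ≥ 6 - 5*o1) (p1 : g1 ≥ 1) (q2 : 0 ≤ o2) (q2' : o2 ≤ 1) (a2 : g2 ≥ 6 - 5*o2) (p2 : g2 ≥ 1) (q3 : 0 ≤ o3) (q3' : o3 ≤ 1) (a3 : g3 ≥ 6 - 5*o3) (p3 : g3 ≥ 1) (q4 : 0 ≤ o4) (q4' : o4 ≤ 1) (a4 : g4 ≥ 6 - 5*o4) (p4 : g4 ≥ 1) (q5 : 0 ≤ o5) (q5' : o5 ≤ 1) (a5 : g5 ≥ 6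 - 5*o5) (p5 : g5 ≥ 1) (q6 : 0 ≤ o6) (q6' : o6 ≤ 1) (a6 : g6 ≥ 6 - 5*o6) (p6 : g6 ≥ 1) (b1 : o1 + o2 ≤ 1) (c1 : g1 ≥ 8*o2) (e1 : g2 ≥ 8*o1) (b2 : o2 + o3 ≤ 1) (c2 : g2 ≥ 8*o3) (e2 : g3 ≥ 8*o2) (b3 : o3 + o4 ≤ 1) (c3 : g3 ≥ 8*o4) (e3 : g4 ≥ 8*o3) (b4 : o4 + o5 ≤ 1) (c4 : g4 ≥ 8*o5) (e4 : g5 ≥ 8*o4) (b5 : o5 + o6 ≤ 1) (c5 : g5 ≥ 8*o6) (e5 : g6 ≥ 8*o5) (f1 : g2 ≥ 11*o1 + 11*o3 - 11) (f2 : g3 ≥ 11*o2 + 11*o4 - 11) (f3 : g4 ≥ 11*o3 + 11*o5 - 11) (f4 : g5 ≥ 11*o4 + 11*o6 - 11) :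
    g1+g2+g3+g4+g5+g6 ≥ 30 := by
  have w2_1 := W2 g1 g2 o1 o2 q1 q1' a1 p1 q2 q2' a2 p2 b1 c1 e1
  have w2_2 := W2 g2 g3 o2 o3 q2 q2' a2 p2 q3 q3' a3 p3 b2 c2 e2
  have w2_3 := W2 g3 g4 o3 o4 q3 q3' a3 p3 q4 q4' a4 p4 b3 c3 e3
  have w2_4 := W2 g4 g5 o4 o5 q4 q4' a4 p4 q5 q5' a5 p5 b4 c4 e4
  have w2_5 := W2 g5 g6 o5 o6 q5 q5' a5 p5 q6 q6' a6 p6 b5 c5 e5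
  have w3_1 := W3 g1 g2 g3 o1 o2 o3 q1 q1' a1 p1 q2 q2' a2 p2 q3 q3' a3 p3 b1 c1 e1 b2 c2 e2 f1
  have w3_2 := W3 g2 g3 g4 o2 o3 o4 q2 q2' a2 p2 q3 q3' a3 p3 q4 q4' a4 p4 b2 c2 e2 b3 c3 e3 f2
  have w3_3 := W3 g3 g4 g5 o3 o4 o5 q3 q3' a3 p3 q4 q4' a4 p4 q5 q5' a5 p5 b3 c3 e3 b4 c4 e4 f3
  have w3_4 := W3 g4 g5 g6 o4 o5 o6 q4 q4' a4 p4 q5 q5' a5 p5 q6 q6' a6 p6 b4 c4 e4 b5 c5 e5 f4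
  have w4_1 := W4 g1 g2 g3 g4 o1 o2 o3 o4 q1 q1' a1 p1 q2 q2' a2 p2 q3 q3' a3 p3 q4 q4' a4 p4 b1 c1 e1 b2 c2 e2 b3 c3 e3 f1 f2
  have w4_2 := W4 g2 g3 g4 g5 o2 o3 o4 o5 q2 q2' a2 p2 q3 q3' a3 p3 q4 q4' a4 p4 q5 q5' a5 p5 b2 c2 e2 b3 c3 e3 b4 c4 e4 f2 f3
  have w4_3 := W4 g3 g4 g5 g6 o3 o4 o5 o6 q3 q3' a3 p3 q4 q4' a4 p4 q5 q5' a5 p5 q6 q6' a6 p6 b3 c3 e3 b4 c4 e4 b5 c5 e5 f3 f4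
  have w5_1 := W5 g1 g2 g3 g4 g5 o1 o2 o3 o4 o5 q1 q1' a1 p1 q2 q2' a2 p2 q3 q3' a3 p3 q4 q4' a4 p4 q5 q5' a5 p5 b1 c1 e1 b2 c2 e2 b3 c3 e3 b4 c4 e4 f1 f2 f3
  have w5_2 := W5 g2 g3 g4 g5 g6 o2 o3 o4 o5 o6 q2 q2' a2 p2 q3 q3' a3 p3 q4 q4' a4 p4 q5 q5' a5 p5 q6 q6' a6 p6 b2 c2 e2 b3 c3 e3 b4 c4 e4 b5 c5 e5 f2 f3 f4
  omega

lemma W7 (g1 g2 g3 g4 g5 g6 g7 o1 o2 o3 o4 o5 o6 o7 : ℤ)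
    (q1 : 0 ≤ o1) (q1' : o1 ≤ 1) (a1 : g1 ≥ 6 - 5*o1) (p1 : g1 ≥ 1) (q2 : 0 ≤ o2) (q2' : o2 ≤ 1) (a2 : g2 ≥ 6 - 5*o2) (p2 : g2 ≥ 1) (q3 : 0 ≤ o3) (q3' : o3 ≤ 1) (a3 : g3 ≥ 6 - 5*o3) (p3 : g3 ≥ 1) (q4 : 0 ≤ o4) (q4' : o4 ≤ 1) (a4 : g4 ≥ 6 - 5*o4) (p4 : g4 ≥ 1) (q5 : 0 ≤ o5) (q5' : o5 ≤ 1) (a5 : g5 ≥ 6 - 5*o5) (p5 : g5 ≥ 1) (q6 : 0 ≤ o6) (q6' : o6 ≤ 1) (a6 : g6 ≥ 6 - 5*o6) (p6 : g6 ≥ 1) (q7 : 0 ≤ o7) (q7' : o7 ≤ 1) (a7 : g7 ≥ 6 - 5*o7) (p7 : g7 ≥ 1) (b1 : o1 + o2 ≤ 1) (c1 : g1 ≥ 8*o2) (e1 : g2 ≥ 8*o1) (b2 : o2 + o3 ≤ 1) (c2 : g2 ≥ 8*o3) (e2 : g3 ≥ 8*o2) (b3 : o3 + o4 ≤ 1)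 (c3 : g3 ≥ 8*o4) (e3 : g4 ≥ 8*o3) (b4 : o4 + o5 ≤ 1) (c4 : g4 ≥ 8*o5) (e4 : g5 ≥ 8*o4) (b5 : o5 + o6 ≤ 1) (c5 : g5 ≥ 8*o6) (e5 : g6 ≥ 8*o5) (b6 : o6 + o7 ≤ 1) (c6 : g6 ≥ 8*o7) (e6 : g7 ≥ 8*o6) (f1 : g2 ≥ 11*o1 + 11*o3 - 11) (f2 : g3 ≥ 11*o2 + 11*o4 - 11) (f3 : g4 ≥ 11*o3 + 11*o5 - 11) (f4 : g5 ≥ 11*o4 + 11*o6 - 11) (f5 : g6 ≥ 11*o5 + 11*o7 - 11) :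
    g1+g2+g3+g4+g5+g6+g7 ≥ 35 := by
  have w2_1 := W2 g1 g2 o1 o2 q1 q1' a1 p1 q2 q2' a2 p2 b1 c1 e1
  have w2_2 := W2 g2 g3 o2 o3 q2 q2' a2 p2 q3 q3' a3 p3 b2 c2 e2
  have w2_3 := W2 g3 g4 o3 o4 q3 q3' a3 p3 q4 q4' a4 p4 b3 c3 e3
  have w2_4 := W2 g4 g5 o4 o5 q4 q4' a4 p4 q5 q5' a5 p5 b4 c4 e4
  have w2_5 := W2 g5 g6 o5 o6 q5 q5' a5 p5 q6 q6' a6 p6 b5 c5 e5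
  have w2_6 := W2 g6 g7 o6 o7 q6 q6' a6 p6 q7 q7' a7 p7 b6 c6 e6
  have w3_1 := W3 g1 g2 g3 o1 o2 o3 q1 q1' a1 p1 q2 q2' a2 p2 q3 q3' a3 p3 b1 c1 e1 b2 c2 e2 f1
  have w3_2 := W3 g2 g3 g4 o2 o3 o4 q2 q2' a2 p2 q3 q3' a3 p3 q4 q4' a4 p4 b2 c2 e2 b3 c3 e3 f2
  have w3_3 := W3 g3 g4 g5 o3 o4 o5 q3 q3' a3 p3 q4 q4' a4 p4 q5 q5' a5 p5 b3 c3 e3 b4 c4 e4 f3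
  have w3_4 := W3 g4 g5 g6 o4 o5 o6 q4 q4' a4 p4 q5 q5' a5 p5 q6 q6' a6 p6 b4 c4 e4 b5 c5 e5 f4
  have w3_5 := W3 g5 g6 g7 o5 o6 o7 q5 q5' a5 p5 q6 q6' a6 p6 q7 q7' a7 p7 b5 c5 e5 b6 c6 e6 f5
  have w4_1 := W4 g1 g2 g3 g4 o1 o2 o3 o4 q1 q1' a1 p1 q2 q2' a2 p2 q3 q3' a3 p3 q4 q4' a4 p4 b1 c1 e1 b2 c2 e2 b3 c3 e3 f1 f2
  have w4_2 := W4 g2 g3 g4 g5 o2 o3 o4 o5 q2 q2' a2 p2 q3 q3' a3 p3 q4 q4' a4 p4 q5 q5' a5 p5 b2 c2 e2 b3 c3 e3 b4 c4 e4 f2 f3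
  have w4_3 := W4 g3 g4 g5 g6 o3 o4 o5 o6 q3 q3' a3 p3 q4 q4' a4 p4 q5 q5' a5 p5 q6 q6' a6 p6 b3 c3 e3 b4 c4 e4 b5 c5 e5 f3 f4
  have w4_4 := W4 g4 g5 g6 g7 o4 o5 o6 o7 q4 q4' a4 p4 q5 q5' a5 p5 q6 q6' a6 p6 q7 q7' a7 p7 b4 c4 e4 b5 c5 e5 b6 c6 e6 f4 f5
  have w5_1 := W5 g1 g2 g3 g4 g5 o1 o2 o3 o4 o5 q1 q1' a1 p1 q2 q2' a2 p2 q3 q3' a3 p3 q4 q4' a4 p4 q5 q5' a5 p5 b1 c1 e1 b2 c2 e2 b3 c3 e3 b4 c4 e4 f1 f2 f3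
  have w5_2 := W5 g2 g3 g4 g5 g6 o2 o3 o4 o5 o6 q2 q2' a2 p2 q3 q3' a3 p3 q4 q4' a4 p4 q5 q5' a5 p5 q6 q6' a6 p6 b2 c2 e2 b3 c3 e3 b4 c4 e4 b5 c5 e5 f2 f3 f4
  have w5_3 := W5 g3 g4 g5 g6 g7 o3 o4 o5 o6 o7 q3 q3' a3 p3 q4 q4' a4 p4 q5 q5' a5 p5 q6 q6' a6 p6 q7 q7' a7 p7 b3 c3 e3 b4 c4 e4 b5 c5 e5 b6 c6 e6 f3 f4 f5
  have w6_1 := W6 g1 g2 g3 g4 g5 g6 o1 o2 o3 o4 o5 o6 q1 q1' a1 p1 q2 q2' a2 p2 q3 q3' a3 p3 q4 q4' a4 p4 q5 q5' a5 p5 q6 q6' a6 p6 b1 c1 e1 b2 c2 e2 b3 c3 e3 b4 c4 e4 b5 c5 e5 f1 f2 f3 f4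
  have w6_2 := W6 g2 g3 g4 g5 g6 g7 o2 o3 o4 o5 o6 o7 q2 q2' a2 p2 q3 q3' a3 p3 q4 q4' a4 p4 q5 q5' a5 p5 q6 q6' a6 p6 q7 q7' a7 p7 b2 c2 e2 b3 c3 e3 b4 c4 e4 b5 c5 e5 b6 c6 e6 f2 f3 f4 f5
  omega

lemma W8 (g1 g2 g3 g4 g5 g6 g7 g8 o1 o2 o3 o4 o5 o6 o7 o8 : ℤ)
    (q1 : 0 ≤ o1) (q1' : o1 ≤ 1) (a1 : g1 ≥ 6 - 5*o1) (p1 : g1 ≥ 1) (q2 : 0 ≤ o2) (q2' : o2 ≤ 1) (a2 : g2 ≥ 6 - 5*o2) (p2 : g2 ≥ 1) (q3 : 0 ≤ o3) (q3' : o3 ≤ 1) (a3 : g3 ≥ 6 - 5*o3) (p3 : g3 ≥ 1) (q4 : 0 ≤ o4) (q4' : o4 ≤ 1) (a4 : g4 ≥ 6 - 5*o4) (p4 : g4 ≥ 1) (q5 : 0 ≤ o5) (q5' : o5 ≤ 1) (a5 : g5 ≥ 6 - 5*o5) (p5 : g5 ≥ 1) (q6 : 0 ≤ o6) (q6' : o6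 ≤ 1) (a6 : g6 ≥ 6 - 5*o6) (p6 : g6 ≥ 1) (q7 : 0 ≤ o7) (q7' : o7 ≤ 1) (a7 : g7 ≥ 6 - 5*o7) (p7 : g7 ≥ 1) (q8 : 0 ≤ o8) (q8' : o8 ≤ 1) (a8 : g8 ≥ 6 - 5*o8) (p8 : g8 ≥ 1) (b1 : o1 + o2 ≤ 1) (c1 : g1 ≥ 8*o2) (e1 : g2 ≥ 8*o1) (b2 : o2 + o3 ≤ 1) (c2 : g2 ≥ 8*o3) (e2 : g3 ≥ 8*o2) (b3 : o3 + o4 ≤ 1) (c3 : g3 ≥ 8*o4) (e3 : g4 ≥ 8*o3) (b4 : o4 + o5 ≤ 1) (c4 : g4 ≥ 8*o5) (e4 : g5 ≥ 8*o4) (b5 : o5 + o6 ≤ 1) (c5 : g5 ≥ 8*o6) (e5 : g6 ≥ 8*o5) (b6 : o6 + o7 ≤ 1) (c6 : g6 ≥ 8*o7) (e6 : g7 ≥ 8*o6) (b7 : o7 + o8 ≤ 1) (c7 : g7 ≥ 8*o8) (e7 : g8 ≥ 8*o7) (f1 : g2 ≥ 11*o1 + 11*o3 - 11) (f2 : g3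 ≥ 11*o2 + 11*o4 - 11) (f3 : g4 ≥ 11*o3 + 11*o5 - 11) (f4 : g5 ≥ 11*o4 + 11*o6 - 11) (f5 : g6 ≥ 11*o5 + 11*o7 - 11) (f6 : g7 ≥ 11*o6 + 11*o8 - 11) :
    g1+g2+g3+g4+g5+g6+g7+g8 ≥ 41 := by
  have w2_1 := W2 g1 g2 o1 o2 q1 q1' a1 p1 q2 q2' a2 p2 b1 c1 e1
  have w2_2 := W2 g2 g3 o2 o3 q2 q2' a2 p2 q3 q3' a3 p3 b2 c2 e2
  have w2_3 := W2 g3 g4 o3 o4 q3 q3' a3 p3 q4 q4' a4 p4 b3 c3 e3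
  have w2_4 := W2 g4 g5 o4 o5 q4 q4' a4 p4 q5 q5' a5 p5 b4 c4 e4
  have w2_5 := W2 g5 g6 o5 o6 q5 q5' a5 p5 q6 q6' a6 p6 b5 c5 e5
  have w2_6 := W2 g6 g7 o6 o7 q6 q6' a6 p6 q7 q7' a7 p7 b6 c6 e6
  have w2_7 := W2 g7 g8 o7 o8 q7 q7' a7 p7 q8 q8' a8 p8 b7 c7 e7
  have w3_1 := W3 g1 g2 g3 o1 o2 o3 q1 q1' a1 p1 q2 q2' a2 p2 q3 q3' a3 p3 b1 c1 e1 b2 c2 e2 f1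
  have w3_2 := W3 g2 g3 g4 o2 o3 o4 q2 q2' a2 p2 q3 q3' a3 p3 q4 q4' a4 p4 b2 c2 e2 b3 c3 e3 f2
  have w3_3 := W3 g3 g4 g5 o3 o4 o5 q3 q3' a3 p3 q4 q4' a4 p4 q5 q5' a5 p5 b3 c3 e3 b4 c4 e4 f3
  have w3_4 := W3 g4 g5 g6 o4 o5 o6 q4 q4' a4 p4 q5 q5' a5 p5 q6 q6' a6 p6 b4 c4 e4 b5 c5 e5 f4
  have w3_5 := W3 g5 g6 g7 o5 o6 o7 q5 q5' a5 p5 q6 q6' a6 p6 q7 q7' a7 p7 b5 c5 e5 b6 c6 e6 f5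
  have w3_6 := W3 g6 g7 g8 o6 o7 o8 q6 q6' a6 p6 q7 q7' a7 p7 q8 q8' a8 p8 b6 c6 e6 b7 c7 e7 f6
  have w4_1 := W4 g1 g2 g3 g4 o1 o2 o3 o4 q1 q1' a1 p1 q2 q2' a2 p2 q3 q3' a3 p3 q4 q4' a4 p4 b1 c1 e1 b2 c2 e2 b3 c3 e3 f1 f2
  have w4_2 := W4 g2 g3 g4 g5 o2 o3 o4 o5 q2 q2' a2 p2 q3 q3' a3 p3 q4 q4' a4 p4 q5 q5' a5 p5 b2 c2 e2 b3 c3 e3 b4 c4 e4 f2 f3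
  have w4_3 := W4 g3 g4 g5 g6 o3 o4 o5 o6 q3 q3' a3 p3 q4 q4' a4 p4 q5 q5' a5 p5 q6 q6' a6 p6 b3 c3 e3 b4 c4 e4 b5 c5 e5 f3 f4
  have w4_4 := W4 g4 g5 g6 g7 o4 o5 o6 o7 q4 q4' a4 p4 q5 q5' a5 p5 q6 q6' a6 p6 q7 q7' a7 p7 b4 c4 e4 b5 c5 e5 b6 c6 e6 f4 f5
  have w4_5 := W4 g5 g6 g7 g8 o5 o6 o7 o8 q5 q5' a5 p5 q6 q6' a6 p6 q7 q7' a7 p7 q8 q8' a8 p8 b5 c5 e5 b6 c6 e6 b7 c7 e7 f5 f6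
  have w5_1 := W5 g1 g2 g3 g4 g5 o1 o2 o3 o4 o5 q1 q1' a1 p1 q2 q2' a2 p2 q3 q3' a3 p3 q4 q4' a4 p4 q5 q5' a5 p5 b1 c1 e1 b2 c2 e2 b3 c3 e3 b4 c4 e4 f1 f2 f3
  have w5_2 := W5 g2 g3 g4 g5 g6 o2 o3 o4 o5 o6 q2 q2' a2 p2 q3 q3' a3 p3 q4 q4' a4 p4 q5 q5' a5 p5 q6 q6' a6 p6 b2 c2 e2 b3 c3 e3 b4 c4 e4 b5 c5 e5 f2 f3 f4
  have w5_3 := W5 g3 g4 g5 g6 g7 o3 o4 o5 o6 o7 q3 q3' a3 p3 q4 q4' a4 p4 q5 q5' a5 p5 q6 q6' a6 p6 q7 q7' a7 p7 b3 c3 e3 b4 c4 e4 b5 c5 e5 b6 c6 e6 f3 f4 f5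
  have w5_4 := W5 g4 g5 g6 g7 g8 o4 o5 o6 o7 o8 q4 q4' a4 p4 q5 q5' a5 p5 q6 q6' a6 p6 q7 q7' a7 p7 q8 q8' a8 p8 b4 c4 e4 b5 c5 e5 b6 c6 e6 b7 c7 e7 f4 f5 f6
  have w6_1 := W6 g1 g2 g3 g4 g5 g6 o1 o2 o3 o4 o5 o6 q1 q1' a1 p1 q2 q2' a2 p2 q3 q3' a3 p3 q4 q4' a4 p4 q5 q5' a5 p5 q6 q6' a6 p6 b1 c1 e1 b2 c2 e2 b3 c3 e3 b4 c4 e4 b5 c5 e5 f1 f2 f3 f4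
  have w6_2 := W6 g2 g3 g4 g5 g6 g7 o2 o3 o4 o5 o6 o7 q2 q2' a2 p2 q3 q3' a3 p3 q4 q4' a4 p4 q5 q5' a5 p5 q6 q6' a6 p6 q7 q7' a7 p7 b2 c2 e2 b3 c3 e3 b4 c4 e4 b5 c5 e5 b6 c6 e6 f2 f3 f4 f5
  have w6_3 := W6 g3 g4 g5 g6 g7 g8 o3 o4 o5 o6 o7 o8 q3 q3' a3 p3 q4 q4' a4 p4 q5 q5' a5 p5 q6 q6' a6 p6 q7 q7' a7 p7 q8 q8' a8 p8 b3 c3 e3 b4 c4 e4 b5 c5 e5 b6 c6 e6 b7 c7 e7 f3 f4 f5 f6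
  have w7_1 := W7 g1 g2 g3 g4 g5 g6 g7 o1 o2 o3 o4 o5 o6 o7 q1 q1' a1 p1 q2 q2' a2 p2 q3 q3' a3 p3 q4 q4' a4 p4 q5 q5' a5 p5 q6 q6' a6 p6 q7 q7' a7 p7 b1 c1 e1 b2 c2 e2 b3 c3 e3 b4 c4 e4 b5 c5 e5 b6 c6 e6 f1 f2 f3 f4 f5
  have w7_2 := W7 g2 g3 g4 g5 g6 g7 g8 o2 o3 o4 o5 o6 o7 o8 q2 q2' a2 p2 q3 q3' a3 p3 q4 q4' a4 p4 q5 q5' a5 p5 q6 q6' a6 p6 q7 q7' a7 p7 q8 q8' a8 p8 b2 c2 e2 b3 c3 e3 b4 c4 e4 b5 c5 e5 b6 c6 e6 b7 c7 e7 f2 f3 f4 f5 f6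
  omega


lemma mkA (u v : ℤ) (hlt : u < v) (nd : v - u ≠ 2 ∧ v - u ≠ 3 ∧ v - u ≠ 4 ∧ v - u ≠ 5 ∧ v - u ≠ 7 ∧ v - u ≠ 10) :
    ∃ o : ℤ, 0 ≤ o ∧ o ≤ 1 ∧ v - u ≥ 6 - 5*o ∧ (v - u = 1 ↔ o = 1) ∧ v - u ≥ 1 := by
  by_cases h : v - u = 1
  · exact ⟨1, by norm_num, by norm_num, by omega, by simp [h], by omega⟩
  · exact ⟨0, by norm_num, by norm_num, by omega, by simp [h], by omega⟩

lemma mkB (u v w o p : ℤ) (io : v - u = 1 ↔ o = 1) (io' : w - v = 1 ↔ p = 1)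
    (ho : 0 ≤ o) (ho' : o ≤ 1) (hp : 0 ≤ p) (hp' : p ≤ 1)
    (ndB : w - u ≠ 2 ∧ w - u ≠ 3 ∧ w - u ≠ 4 ∧ w - u ≠ 5 ∧ w - u ≠ 7 ∧ w - u ≠ 10) : o + p ≤ 1 := by
  rcases (show o = 0 ∨ o = 1 by omega) with h | h
  · omega
  · rcases (show p = 0 ∨ p = 1 by omega) with h' | h'
    · omega
    · have h1 := io.mpr h
      have h2 := io'.mpr h'
      omega

lemma mkC (u v w p : ℤ) (io' : w - v = 1 ↔ p = 1) (hp : 0 ≤ p) (hp' : p ≤ 1)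
    (hlt : u < v) (ndA : v - u ≠ 2 ∧ v - u ≠ 3 ∧ v - u ≠ 4 ∧ v - u ≠ 5 ∧ v - u ≠ 7 ∧ v - u ≠ 10) (ndB : w - u ≠ 2 ∧ w - u ≠ 3 ∧ w - u ≠ 4 ∧ w - u ≠ 5 ∧ w - u ≠ 7 ∧ w - u ≠ 10) : v - u ≥ 8*p := by
  rcases (show p = 0 ∨ p = 1 by omega) with h | h
  · omega
  · have h1 := io'.mpr h
    omega

lemma mkE (u v w o : ℤ) (io : v - u = 1 ↔ o = 1) (ho : 0 ≤ o) (ho' : o ≤ 1)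
    (hlt : v < w) (ndA : w - v ≠ 2 ∧ w - v ≠ 3 ∧ w - v ≠ 4 ∧ w - v ≠ 5 ∧ w - v ≠ 7 ∧ w - v ≠ 10) (ndB : w - u ≠ 2 ∧ w - u ≠ 3 ∧ w - u ≠ 4 ∧ w - u ≠ 5 ∧ w - u ≠ 7 ∧ w - u ≠ 10) : w - v ≥ 8*o := by
  rcases (show o = 0 ∨ o = 1 by omega) with h | h
  · omega
  · have h1 := io.mpr h
    omega

lemma mkF (u v w z o p : ℤ) (io : v - u = 1 ↔ o = 1) (io' : z - w = 1 ↔ p = 1)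
    (ho : 0 ≤ o) (ho' : o ≤ 1) (hp : 0 ≤ p) (hp' : p ≤ 1) (hlt : v < w)
    (ndA : w - v ≠ 2 ∧ w - v ≠ 3 ∧ w - v ≠ 4 ∧ w - v ≠ 5 ∧ w - v ≠ 7 ∧ w - v ≠ 10) (ndB1 : w - u ≠ 2 ∧ w - u ≠ 3 ∧ w - u ≠ 4 ∧ w - u ≠ 5 ∧ w - u ≠ 7 ∧ w - u ≠ 10) (ndB2 : z - v ≠ 2 ∧ z - v ≠ 3 ∧ z - v ≠ 4 ∧ z - v ≠ 5 ∧ z - v ≠ 7 ∧ z - v ≠ 10)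
    (ndC : z - u ≠ 2 ∧ z - u ≠ 3 ∧ z - u ≠ 4 ∧ z - u ≠ 5 ∧ z - u ≠ 7 ∧ z - u ≠ 10) : w - v ≥ 11*o + 11*p - 11 := by
  rcases (show o = 0 ∨ o = 1 by omega) with h | h
  · omega
  · rcases (show p = 0 ∨ p = 1 by omega) with h' | h'
    · omega
    · have h1 := io.mpr h
      have h2 := io'.mpr h'
      omega

lemma no9 (y0 y1 y2 y3 y4 y5 y6 y7 y8 : ℤ) (hlt0 : y0 < y1) (hlt1 : y1 < y2) (hlt2 : y2 < y3) (hlt3 : y3 < y4) (hlt4 : y4 < y5) (hlt5 : y5 < y6) (hlt6 : y6 < y7) (hlt7 : y7 < y8)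
    (hspan : y8 - y0 ≤ 40)
    (nd01 : y1 - y0 ≠ 2 ∧ y1 - y0 ≠ 3 ∧ y1 - y0 ≠ 4 ∧ y1 - y0 ≠ 5 ∧ y1 - y0 ≠ 7 ∧ y1 - y0 ≠ 10) (nd02 : y2 - y0 ≠ 2 ∧ y2 - y0 ≠ 3 ∧ y2 - y0 ≠ 4 ∧ y2 - y0 ≠ 5 ∧ y2 - y0 ≠ 7 ∧ y2 - y0 ≠ 10) (nd03 : y3 - y0 ≠ 2 ∧ y3 - y0 ≠ 3 ∧ y3 - y0 ≠ 4 ∧ y3 - y0 ≠ 5 ∧ y3 - y0 ≠ 7 ∧ y3 - y0 ≠ 10) (nd12 : y2 - y1 ≠ 2 ∧ y2 - y1 ≠ 3 ∧ y2 - y1 ≠ 4 ∧ y2 - y1 ≠ 5 ∧ y2 - y1 ≠ 7 ∧ y2 - y1 ≠ 10) (nd13 : y3 - y1 ≠ 2 ∧ y3 - y1 ≠ 3 ∧ y3 - y1 ≠ 4 ∧ y3 - y1 ≠ 5 ∧ y3 - y1 ≠ 7 ∧ y3 - y1 ≠ 10) (nd14 : y4 - y1 ≠ 2 ∧ y4 -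 y1 ≠ 3 ∧ y4 - y1 ≠ 4 ∧ y4 - y1 ≠ 5 ∧ y4 - y1 ≠ 7 ∧ y4 - y1 ≠ 10) (nd23 : y3 - y2 ≠ 2 ∧ y3 - y2 ≠ 3 ∧ y3 - y2 ≠ 4 ∧ y3 - y2 ≠ 5 ∧ y3 - y2 ≠ 7 ∧ y3 - y2 ≠ 10) (nd24 : y4 - y2 ≠ 2 ∧ y4 - y2 ≠ 3 ∧ y4 - y2 ≠ 4 ∧ y4 - y2 ≠ 5 ∧ y4 - y2 ≠ 7 ∧ y4 - y2 ≠ 10) (nd25 : y5 - y2 ≠ 2 ∧ y5 - y2 ≠ 3 ∧ y5 - y2 ≠ 4 ∧ y5 - y2 ≠ 5 ∧ y5 - y2 ≠ 7 ∧ y5 - y2 ≠ 10) (nd34 : y4 - y3 ≠ 2 ∧ y4 - y3 ≠ 3 ∧ y4 - y3 ≠ 4 ∧ y4 - y3 ≠ 5 ∧ y4 - y3 ≠ 7 ∧ y4 - y3 ≠ 10) (nd35 : y5 - y3 ≠ 2 ∧ y5 - y3 ≠ 3 ∧ y5 - y3 ≠ 4 ∧ y5 - y3 ≠ 5 ∧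 y5 - y3 ≠ 7 ∧ y5 - y3 ≠ 10) (nd36 : y6 - y3 ≠ 2 ∧ y6 - y3 ≠ 3 ∧ y6 - y3 ≠ 4 ∧ y6 - y3 ≠ 5 ∧ y6 - y3 ≠ 7 ∧ y6 - y3 ≠ 10) (nd45 : y5 - y4 ≠ 2 ∧ y5 - y4 ≠ 3 ∧ y5 - y4 ≠ 4 ∧ y5 - y4 ≠ 5 ∧ y5 - y4 ≠ 7 ∧ y5 - y4 ≠ 10) (nd46 : y6 - y4 ≠ 2 ∧ y6 - y4 ≠ 3 ∧ y6 - y4 ≠ 4 ∧ y6 - y4 ≠ 5 ∧ y6 - y4 ≠ 7 ∧ y6 - y4 ≠ 10) (nd47 : y7 - y4 ≠ 2 ∧ y7 - y4 ≠ 3 ∧ y7 - y4 ≠ 4 ∧ y7 - y4 ≠ 5 ∧ y7 - y4 ≠ 7 ∧ y7 - y4 ≠ 10) (nd56 : y6 - y5 ≠ 2 ∧ y6 - y5 ≠ 3 ∧ y6 - y5 ≠ 4 ∧ y6 - y5 ≠ 5 ∧ y6 - y5 ≠ 7 ∧ y6 - y5 ≠ 10) (nd57 : y7 - y5 ≠ 2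 ∧ y7 - y5 ≠ 3 ∧ y7 - y5 ≠ 4 ∧ y7 - y5 ≠ 5 ∧ y7 - y5 ≠ 7 ∧ y7 - y5 ≠ 10) (nd58 : y8 - y5 ≠ 2 ∧ y8 - y5 ≠ 3 ∧ y8 - y5 ≠ 4 ∧ y8 - y5 ≠ 5 ∧ y8 - y5 ≠ 7 ∧ y8 - y5 ≠ 10) (nd67 : y7 - y6 ≠ 2 ∧ y7 - y6 ≠ 3 ∧ y7 - y6 ≠ 4 ∧ y7 - y6 ≠ 5 ∧ y7 - y6 ≠ 7 ∧ y7 - y6 ≠ 10) (nd68 : y8 - y6 ≠ 2 ∧ y8 - y6 ≠ 3 ∧ y8 - y6 ≠ 4 ∧ y8 - y6 ≠ 5 ∧ y8 - y6 ≠ 7 ∧ y8 - y6 ≠ 10) (nd78 : y8 - y7 ≠ 2 ∧ y8 - y7 ≠ 3 ∧ y8 - y7 ≠ 4 ∧ y8 - y7 ≠ 5 ∧ y8 - y7 ≠ 7 ∧ y8 - y7 ≠ 10) : False := by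
  obtain ⟨o1, q1, q1', a1, io1, p1⟩ := mkA y0 y1 hlt0 nd01
  obtain ⟨o2, q2, q2', a2, io2, p2⟩ := mkA y1 y2 hlt1 nd12
  obtain ⟨o3, q3, q3', a3, io3, p3⟩ := mkA y2 y3 hlt2 nd23
  obtain ⟨o4, q4, q4', a4, io4, p4⟩ := mkA y3 y4 hlt3 nd34
  obtain ⟨o5, q5, q5', a5, io5, p5⟩ := mkA y4 y5 hlt4 nd45
  obtain ⟨o6, q6, q6', a6, io6, p6⟩ := mkA y5 y6 hlt5 nd56
  obtain ⟨o7, q7, q7', a7, io7, p7⟩ := mkA y6 y7 hlt6 nd67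
  obtain ⟨o8, q8, q8', a8, io8, p8⟩ := mkA y7 y8 hlt7 nd78
  have b1 := mkB y0 y1 y2 o1 o2 io1 io2 q1 q1' q2 q2' nd02
  have c1 := mkC y0 y1 y2 o2 io2 q2 q2' hlt0 nd01 nd02
  have e1 := mkE y0 y1 y2 o1 io1 q1 q1' hlt1 nd12 nd02
  have b2 := mkB y1 y2 y3 o2 o3 io2 io3 q2 q2' q3 q3' nd13
  have c2 := mkC y1 y2 y3 o3 io3 q3 q3' hlt1 nd12 nd13
  have e2 := mkE y1 y2 y3 o2 io2 q2 q2' hlt2 nd23 nd13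
  have b3 := mkB y2 y3 y4 o3 o4 io3 io4 q3 q3' q4 q4' nd24
  have c3 := mkC y2 y3 y4 o4 io4 q4 q4' hlt2 nd23 nd24
  have e3 := mkE y2 y3 y4 o3 io3 q3 q3' hlt3 nd34 nd24
  have b4 := mkB y3 y4 y5 o4 o5 io4 io5 q4 q4' q5 q5' nd35
  have c4 := mkC y3 y4 y5 o5 io5 q5 q5' hlt3 nd34 nd35
  have e4 := mkE y3 y4 y5 o4 io4 q4 q4' hlt4 nd45 nd35
  have b5 := mkB y4 y5 y6 o5 o6 io5 io6 q5 q5' q6 q6' nd46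
  have c5 := mkC y4 y5 y6 o6 io6 q6 q6' hlt4 nd45 nd46
  have e5 := mkE y4 y5 y6 o5 io5 q5 q5' hlt5 nd56 nd46
  have b6 := mkB y5 y6 y7 o6 o7 io6 io7 q6 q6' q7 q7' nd57
  have c6 := mkC y5 y6 y7 o7 io7 q7 q7' hlt5 nd56 nd57
  have e6 := mkE y5 y6 y7 o6 io6 q6 q6' hlt6 nd67 nd57
  have b7 := mkB y6 y7 y8 o7 o8 io7 io8 q7 q7' q8 q8' nd68
  have c7 := mkC y6 y7 y8 o8 io8 q8 q8' hlt6 nd67 nd68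
  have e7 := mkE y6 y7 y8 o7 io7 q7 q7' hlt7 nd78 nd68
  have f1 := mkF y0 y1 y2 y3 o1 o3 io1 io3 q1 q1' q3 q3' hlt1 nd12 nd02 nd13 nd03
  have f2 := mkF y1 y2 y3 y4 o2 o4 io2 io4 q2 q2' q4 q4' hlt2 nd23 nd13 nd24 nd14
  have f3 := mkF y2 y3 y4 y5 o3 o5 io3 io5 q3 q3' q5 q5' hlt3 nd34 nd24 nd35 nd25
  have f4 := mkF y3 y4 y5 y6 o4 o6 io4 io6 q4 q4' q6 q6' hlt4 nd45 nd35 nd46 nd36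
  have f5 := mkF y4 y5 y6 y7 o5 o7 io5 io7 q5 q5' q7 q7' hlt5 nd56 nd46 nd57 nd47
  have f6 := mkF y5 y6 y7 y8 o6 o8 io6 io8 q6 q6' q8 q8' hlt6 nd67 nd57 nd68 nd58
  have main := W8 (y1 - y0) (y2 - y1) (y3 - y2) (y4 - y3) (y5 - y4) (y6 - y5) (y7 - y6) (y8 - y7) o1 o2 o3 o4 o5 o6 o7 o8 q1 q1' a1 p1 q2 q2' a2 p2 q3 q3' a3 p3 q4 q4' a4 p4 q5 q5' a5 p5 q6 q6' a6 p6 q7 q7' a7 p7 q8 q8' a8 p8 b1 c1 e1 b2 c2 e2 b3 c3 e3 b4 c4 e4 b5 c5 e5 b6 c6 e6 b7 c7 e7 f1 f2 f3 f4 f5 f6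
  linarith [main, hspan]


lemma dist_small {t : ℤ} (ht5 : t = 5) (u v : ℤ)
    (h : v - u = 2 ∨ v - u = 3 ∨ v - u = 4 ∨ v - u = 5 ∨ v - u = 7 ∨ v - u = 10) :
    (distG t).dist u v ≤ 2 := by
  subst ht5
  have h5 : (5:ℤ) ≤ 5 := le_refl _
  rcases h with h|h|h|h|h|h
  · have := dist_le_comb h5 u 1 0
    rw [show u + 2*1 + 5*0 = v by omega] at this
    exact le_trans this (by norm_num)
  · have := dist_le_comb h5 u (-1) 1
    rw [show u + 2*(-1) + 5*1 = v by omega] at this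
    exact le_trans this (by norm_num)
  · have := dist_le_comb h5 u 2 0
    rw [show u + 2*2 + 5*0 = v by omega] at this
    exact le_trans this (by norm_num)
  · have := dist_le_comb h5 u 0 1
    rw [show u + 2*0 + 5*1 = v by omega] at this
    exact le_trans this (by norm_num)
  · have := dist_le_comb h5 u 1 1
    rw [show u + 2*1 + 5*1 = v by omega] at this
    exact le_trans this (by norm_num)
  · have := dist_le_comb h5 u 0 2
    rw [show u + 2*0 + 5*2 = v by omega] at this
    exact le_trans this (by norm_num)

lemma mk_nd {t : ℤ} (ht5 : t = 5) {k : ℕ} (f : ℤ → Fin k)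
    (hf : ∀ u v : ℤ, u ≠ v → f u = f v → 2 < (distG t).dist u v)
    (u v : ℤ) (hlt : u < v) (heq : f u = f v) :
    v - u ≠ 2 ∧ v - u ≠ 3 ∧ v - u ≠ 4 ∧ v - u ≠ 5 ∧ v - u ≠ 7 ∧ v - u ≠ 10 := by
  have hne : u ≠ v := by omega
  have hd := hf u v hne heq
  refine ⟨?_,?_,?_,?_,?_,?_⟩ <;> intro hEq <;>
    exact absurd (dist_small ht5 u v (by omega)) (by omega)

theorem stmt17 (t : ℤ) (ht : Odd t) (h5 : 5 ≤ t) (d : ℕ) (hd : t - 3 ≤ (d : ℤ))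
    (L : ℕ) (hL : (L : ℤ) = 1 + t * ((d : ℤ) - (t - 3) / 2)) :
    IsLeast {k : ℕ | ∃ f : ℤ → Fin k, ∀ u v : ℤ, u ≠ v → f u = f v →
        d < (distG t).dist u v} L ∧
    (∀ u v : ℤ, u ≠ v → u % (L : ℤ) = v % (L : ℤ) → d < (distG t).dist u v) ∧
    d + 1 ≤ (distG t).dist 0 (L : ℤ) := by
  classical
  obtain ⟨kk, hkk⟩ := ht
  have ht' : Odd t := ⟨kk, hkk⟩
  have hts : t = 2*(kk-1)+3 := by omega
  set s : ℤ := kk - 1 with hsdef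
  have hs1 : 1 ≤ s := by omega
  set m : ℤ := (d:ℤ) - s with hmdef
  have hms : s ≤ m := by omega
  have hdiv : ((t:ℤ)-3)/2 = s := by omega
  have hLm : (L:ℤ) = 1 + t*m := by rw [hL, hdiv]
  have hd_eq : (d:ℤ) = m + s := by omega
  have htm : t*1 ≤ t*m := mul_le_mul_of_nonneg_left (by omega) (by omega)
  have hL6 : 6 ≤ (L:ℤ) := by linarith
  have hL0 : (0:ℤ) < (L:ℤ) := by linarith
  -- Part 2
  have P2 : ∀ u v : ℤ, u ≠ v → u % (L:ℤ) = v % (L:ℤ) → d < (distG t).dist u v := by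
    intro u v hne hmod
    obtain ⟨x, y, hxy, hle⟩ := dist_comb ht' h5 u v
    have hdvd : (L:ℤ) ∣ (v - u) := by
      have hsub := Int.sub_emod v u (L:ℤ)
      rw [hmod, sub_self, Int.zero_emod] at hsub
      exact Int.dvd_of_emod_eq_zero hsub
    have hkey := key_lb hts hs1 hms hLm hxy hdvd (by omega : v - u ≠ 0)
    have hcast : ((d:ℤ)) + 1 ≤ ((distG t).dist u v : ℤ) := by
      calc (d:ℤ)+1 = m + s + 1 := by omega
      _ ≤ |x| + |y| := hkey
      _ = (x.natAbs : ℤ) + (y.natAbs : ℤ) := by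
          rw [Int.abs_eq_natAbs, Int.abs_eq_natAbs]
      _ ≤ ((distG t).dist u v : ℤ) := by exact_mod_cast hle
    have : d + 1 ≤ (distG t).dist u v := by exact_mod_cast hcast
    omega
  refine ⟨⟨?_, ?_⟩, P2, ?_⟩
  · -- membership: periodic coloring
    refine ⟨fun z => ⟨(z % (L:ℤ)).toNat, ?_⟩, ?_⟩
    · have h1 := Int.emod_nonneg z (by omega : (L:ℤ) ≠ 0)
      have h2 := Int.emod_lt_of_pos z hL0
      omega
    · intro u v hne hfe
      apply P2 u v hne
      have h1 := Int.emod_nonneg u (by omega : (L:ℤ) ≠ 0)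
      have h2 := Int.emod_nonneg v (by omega : (L:ℤ) ≠ 0)
      have h3 : (u % (L:ℤ)).toNat = (v % (L:ℤ)).toNat := congrArg Fin.val hfe
      omega
  · -- lower bound
    rintro k ⟨f, hf⟩
    rcases (show 2 ≤ m ∨ m = 1 by omega) with hm2 | hm1
    · -- interval {0,...,L-1} is a d-clique
      have aux : ∀ i j : Fin L, i < j → f ((i:ℕ):ℤ) ≠ f ((j:ℕ):ℤ) := by
        intro i j hij hfe
        have hne : ((i:ℕ):ℤ) ≠ ((j:ℕ):ℤ) := by
          have : (i:ℕ) < (j:ℕ) := hij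
          omega
        have hgt := hf _ _ hne hfe
        obtain ⟨x, y, hxy, hxyle⟩ := ub_rep hts hs1 hm2
          (n := ((j:ℕ):ℤ) - ((i:ℕ):ℤ))
          (by have : (i:ℕ) < (j:ℕ) := hij; omega)
          (by have : (j:ℕ) < L := j.isLt
              have : ((j:ℕ):ℤ) < (L:ℤ) := by exact_mod_cast this
              linarith)
        have hdle := dist_le_comb h5 ((i:ℕ):ℤ) x y
        rw [show ((i:ℕ):ℤ) + 2*x + t*y = ((j:ℕ):ℤ) by linarith] at hdle
        have hxyle' : (x.natAbs : ℤ) + (y.natAbs : ℤ) ≤ (d:ℤ) := by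
          rw [← Int.abs_eq_natAbs, ← Int.abs_eq_natAbs]; omega
        have : ((distG t).dist ((i:ℕ):ℤ) ((j:ℕ):ℤ) : ℤ) ≤ (d:ℤ) := by
          have h1 : ((distG t).dist ((i:ℕ):ℤ) ((j:ℕ):ℤ) : ℤ) ≤ (x.natAbs : ℤ) + (y.natAbs : ℤ) := by
            exact_mod_cast hdle
          omega
        have : (distG t).dist ((i:ℕ):ℤ) ((j:ℕ):ℤ) ≤ d := by exact_mod_cast this
        omega
      have hinj : Function.Injective (fun i : Fin L => f ((i:ℕ):ℤ)) := by
        intro i j hij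
        by_contra hne
        rcases lt_or_gt_of_ne hne with h | h
        · exact aux i j h hij
        · exact aux j i h hij.symm
      have := Fintype.card_le_of_injective _ hinj
      simpa using this
    · -- t = 5, d = 2, L = 6 : pigeonhole + no9
      have ht5 : t = 5 := by omega
      have hs1' : s = 1 := by omega
      have hd2 : d = 2 := by omega
      have htm5 : t*m = 5 := by rw [hm1, mul_one]; exact ht5
      have hL6' : L = 6 := by omega
      subst hd2
      by_contra hcon
      push_neg at hcon
      have hk5 : k ≤ 5 := by omega
      have hcard : Fintype.card (Fin k) * 8 < Fintype.card (Fin 41) := by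
        simp only [Fintype.card_fin]; omega
      obtain ⟨c, hc⟩ := Fintype.exists_lt_card_fiber_of_mul_lt_card
        (f := fun i : Fin 41 => f ((i:ℕ):ℤ)) (n := 8) hcard
      obtain ⟨T, hTsub, hTcard⟩ := Finset.exists_subset_card_eq (show 9 ≤ (Finset.univ.filter fun i : Fin 41 => f ((i:ℕ):ℤ) = c).card by omega)
      set e := T.orderIsoOfFin hTcard with he
      set Y : Fin 9 → ℤ := fun i => (((e i : Fin 41) : ℕ) : ℤ) with hY
      have Ylt : ∀ i j : Fin 9, i < j → Y i < Y j := by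
        intro i j hij
        have h1 : (e i : {x // x ∈ T}) < e j := e.lt_iff_lt.mpr hij
        have h2 : (e i : Fin 41) < (e j : Fin 41) := h1
        have h3 : ((e i : Fin 41) : ℕ) < ((e j : Fin 41) : ℕ) := h2
        simp only [hY]
        exact_mod_cast h3
      have Ycol : ∀ i : Fin 9, f (Y i) = c := by
        intro i
        have hmem : (e i : Fin 41) ∈ T := (e i).2
        have := hTsub hmem
        exact (Finset.mem_filter.mp this).2
      have Yub : ∀ i : Fin 9, Y i ≤ 40 := by
        intro i
        have : ((e i : Fin 41) : ℕ) < 41 := (e i : Fin 41).isLt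
        simp only [hY]
        omega
      have Ylb : (0:ℤ) ≤ Y 0 := by simp only [hY]; positivity
      have hspan : Y 8 - Y 0 ≤ 40 := by
        have := Yub 8
        omega
      have hfe : ∀ i j : Fin 9, f (Y i) = f (Y j) := by
        intro i j; rw [Ycol i, Ycol j]
      have ND := fun (i j : Fin 9) (hij : i < j) =>
        mk_nd ht5 f hf (Y i) (Y j) (Ylt i j hij) (hfe i j)
      exact no9 (Y 0) (Y 1) (Y 2) (Y 3) (Y 4) (Y 5) (Y 6) (Y 7) (Y 8)
        (Ylt 0 1 (by decide)) (Ylt 1 2 (by decide)) (Ylt 2 3 (by decide))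
        (Ylt 3 4 (by decide)) (Ylt 4 5 (by decide)) (Ylt 5 6 (by decide))
        (Ylt 6 7 (by decide)) (Ylt 7 8 (by decide)) hspan
        (ND 0 1 (by decide)) (ND 0 2 (by decide)) (ND 0 3 (by decide))
        (ND 1 2 (by decide)) (ND 1 3 (by decide)) (ND 1 4 (by decide))
        (ND 2 3 (by decide)) (ND 2 4 (by decide)) (ND 2 5 (by decide))
        (ND 3 4 (by decide)) (ND 3 5 (by decide)) (ND 3 6 (by decide))
        (ND 4 5 (by decide)) (ND 4 6 (by decide)) (ND 4 7 (by decide))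
        (ND 5 6 (by decide)) (ND 5 7 (by decide)) (ND 5 8 (by decide))
        (ND 6 7 (by decide)) (ND 6 8 (by decide)) (ND 7 8 (by decide))
  · -- Part 3
    have := P2 0 ((L:ℕ):ℤ) (by omega) (by rw [Int.zero_emod, Int.emod_self])
    omega
end

section
/- The 2-distance chromatic number of G(ℤ,{2,3}) equals 7; more precisely, two distinct integers x,y satisfy d_G(x,y) ≤ 2 in G(ℤ,{2,3}) if and only if |x−y| ∈ {1,2,3,4,5,6}, so the coloring by residues mod 7 is optimal. -/
open SimpleGraph

lemma adjG {a b : ℤ} (h : b - a = 2 ∨ b - a = 3) : (distG 3).Adj a b := by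
  rw [distG, SimpleGraph.fromRel_adj]
  constructor
  · omega
  · right
    rcases h with h | h
    · left; rw [abs_eq (by norm_num : (0:ℤ) ≤ 2)]; omega
    · right; rw [abs_eq (by norm_num : (0:ℤ) ≤ 3)]; omega

lemma adjG_bound {a b : ℤ} (h : (distG 3).Adj a b) : |a - b| ≤ 3 := by
  rw [distG, SimpleGraph.fromRel_adj] at h
  rcases h with ⟨_, h | h⟩ <;> rcases h with h | h
  · rw [h]; norm_num
  · rw [h]
  · rw [abs_sub_comm, h]; norm_num
  · rw [abs_sub_comm, h]

lemma walk_bound {x y : ℤ} (w : (distG 3).Walk x y) : |x - y| ≤ 3 * w.length := by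
  induction w with
  | nil => simp
  | @cons a b c h p ih =>
    have h1 := adjG_bound h
    have h2 : |a - c| ≤ |a - b| + |b - c| := abs_sub_le a b c
    simp only [SimpleGraph.Walk.length_cons]
    push_cast
    linarith

lemma reach_add (x : ℤ) (n : ℕ) : (distG 3).Reachable x (x + n) := by
  induction n with
  | zero => simpa using Reachable.refl x
  | succ n ih =>
    refine ih.trans ?_
    have h1 : (distG 3).Adj (x + n) (x + n + 3) := adjG (by right; ring)
    have h2 : (distG 3).Adj (x + (n + 1 : ℕ)) (x + n + 3) := adjG (by left; push_cast; ring)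
    exact (h1.reachable).trans h2.reachable.symm

lemma reach_all (a b : ℤ) : (distG 3).Reachable a b := by
  rcases le_total a b with h | h
  · have := reach_add a (b - a).toNat
    rwa [show a + ((b - a).toNat : ℤ) = b by omega] at this
  · have := reach_add b (a - b).toNat
    rw [show b + ((a - b).toNat : ℤ) = a by omega] at this
    exact this.symm

lemma dist_le_two (x k : ℤ) (hk : 1 ≤ k) (hk6 : k ≤ 6) : (distG 3).dist x (x + k) ≤ 2 := by
  have two_step : ∀ m : ℤ, (distG 3).Adj x m → (distG 3).Adj m (x + k) →
      (distG 3).dist x (x + k) ≤ 2 := by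
    intro m h1 h2
    calc (distG 3).dist x (x + k)
        ≤ (SimpleGraph.Walk.cons h1 (SimpleGraph.Walk.cons h2 SimpleGraph.Walk.nil)).length :=
          SimpleGraph.dist_le _
      _ = 2 := by simp
  have one_step : ∀ (h : (distG 3).Adj x (x + k)), (distG 3).dist x (x + k) ≤ 2 := by
    intro h
    calc (distG 3).dist x (x + k)
        ≤ (SimpleGraph.Walk.cons h SimpleGraph.Walk.nil).length := SimpleGraph.dist_le _
      _ ≤ 2 := by simp
  interval_cases k
  · exact two_step (x + 3) (adjG (by right; ring)) ((adjG (by left; ring)).symm)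
  · exact one_step (adjG (by left; ring))
  · exact one_step (adjG (by right; ring))
  · exact two_step (x + 2) (adjG (by left; ring)) (adjG (by left; ring))
  · exact two_step (x + 2) (adjG (by left; ring)) (adjG (by right; ring))
  · exact two_step (x + 3) (adjG (by right; ring)) (adjG (by right; ring))

theorem stmt18 :
    IsLeast {k : ℕ | ∃ f : ℤ → Fin k, ∀ u v : ℤ, u ≠ v → f u = f v →
        2 < (distG 3).dist u v} 7 ∧
    ∀ x y : ℤ, x ≠ y →
      ((distG 3).dist x y ≤ 2 ↔ |x - y| ∈ ({1, 2, 3, 4, 5, 6} : Set ℤ)) := by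
  have key : ∀ x y : ℤ, x ≠ y →
      ((distG 3).dist x y ≤ 2 ↔ |x - y| ∈ ({1, 2, 3, 4, 5, 6} : Set ℤ)) := by
    intro x y hxy
    constructor
    · intro hd
      obtain ⟨w, hw⟩ := (reach_all x y).exists_walk_length_eq_dist
      have hb := walk_bound w
      rw [hw] at hb
      have hd' : ((distG 3).dist x y : ℤ) ≤ 2 := by exact_mod_cast hd
      have h6 : |x - y| ≤ 6 := by linarith
      have h1 : x - y ≠ 0 := sub_ne_zero.mpr hxy
      simp only [Set.mem_insert_iff, Set.mem_singleton_iff]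
      rw [Int.abs_eq_natAbs] at h6 ⊢
      omega
    · intro hm
      simp only [Set.mem_insert_iff, Set.mem_singleton_iff] at hm
      rw [Int.abs_eq_natAbs] at hm
      rcases le_total x y with h | h
      · have := dist_le_two x (y - x) (by omega) (by omega)
        rwa [show x + (y - x) = y by ring] at this
      · have := dist_le_two y (x - y) (by omega) (by omega)
        rw [show y + (x - y) = x by ring] at this
        rwa [SimpleGraph.dist_comm] at this
  refine ⟨⟨⟨fun n => ⟨(n % 7).toNat, by omega⟩, ?_⟩, ?_⟩, key⟩
  · intro u v huv hf
    simp only [Fin.mk.injEq] at hf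
    have hdvd : (7 : ℤ) ∣ u - v := by omega
    have h7 : 7 ≤ |u - v| :=
      Int.le_of_dvd (abs_pos.mpr (sub_ne_zero.mpr huv)) ((dvd_abs _ _).mpr hdvd)
    by_contra hle
    push_neg at hle
    have hmem := (key u v huv).mp hle
    simp only [Set.mem_insert_iff, Set.mem_singleton_iff] at hmem
    rw [Int.abs_eq_natAbs] at h7 hmem
    omega
  · rintro k ⟨f, hf⟩
    have hinj : Function.Injective (fun i : Fin 7 => f (i : ℤ)) := by
      intro i j hij
      by_contra hne
      have hiz : ((i : ℕ) : ℤ) ≠ ((j : ℕ) : ℤ) := by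
        intro h
        exact hne (Fin.ext (by exact_mod_cast h))
      have hd := hf _ _ hiz hij
      have hmem : |((i : ℕ) : ℤ) - ((j : ℕ) : ℤ)| ∈ ({1, 2, 3, 4, 5, 6} : Set ℤ) := by
        simp only [Set.mem_insert_iff, Set.mem_singleton_iff]
        have h1 : (i : ℕ) < 7 := i.isLt
        have h2 : (j : ℕ) < 7 := j.isLt
        rw [Int.abs_eq_natAbs]
        omega
      have hle := (key _ _ hiz).mpr hmem
      exact absurd (hd.trans_le hle) (lt_irrefl 2)
    have := Fintype.card_le_of_injective _ hinj
    simpa using this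
end
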